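/- arXiv:1905.03975 — 3 statements merged into one kernel-verified Lean document; each statement's English description precedes it below -/
import Mathlib

section
/- Let n > 5 be even and m ≥ 4. In J(n,m), for two internal cycles C and C' sharing no edge, indexed by k and k' with |k−k'| ∉ {1, m−1}, and vertices x ∈ V(C), y ∈ V(C'), one has d(x,y) = n+2 if and only if {x,y} = {u_{nk+n/2+1}, u_{nk'+n/2+1}}. -/
/-- The generalized Jahangir graph `J(n,m)`: vertices are `none` (the central
vertex `c`) and `some a` for `a : ZMod (n*m)` (the cycle vertex `u_{a+1}`).
Cycle vertices are adjacent when consecutive, and `c` is adjacent to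
`u_{nk+1}`, i.e. to `some (n*k)`, for `k = 0, …, m-1`. -/
def jahangir (n m : ℕ) : SimpleGraph (Option (ZMod (n * m))) where
  Adj x y :=
    (x = none ∧ ∃ a : ZMod (n * m), y = some a ∧
        ∃ k : ℕ, k < m ∧ a = ((n * k : ℕ) : ZMod (n * m))) ∨
    (y = none ∧ ∃ a : ZMod (n * m), x = some a ∧
        ∃ k : ℕ, k < m ∧ a = ((n * k : ℕ) : ZMod (n * m))) ∨
    (∃ a b : ZMod (n * m), x = some a ∧ y = some b ∧ a ≠ b ∧ (b = a + 1 ∨ a = b + 1))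
  symm := by
    constructor
    rintro x y (⟨hx, a, hy, hk⟩ | ⟨hy, a, hx, hk⟩ | ⟨a, b, hx, hy, hab, h⟩)
    · exact Or.inr (Or.inl ⟨hx, a, hy, hk⟩)
    · exact Or.inl ⟨hy, a, hx, hk⟩
    · exact Or.inr (Or.inr ⟨b, a, hy, hx, hab.symm, h.symm⟩)
  loopless := by
    constructor
    rintro x (⟨hx, a, hy, _⟩ | ⟨hy, a, hx, _⟩ | ⟨a, b, hx, hy, hab, _⟩)
    · rw [hx] at hy; exact absurd hy (by simp)
    · rw [hy] at hx; exact absurd hx (by simp)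
    · rw [hx] at hy; exact hab (Option.some.inj hy)

/-- `u` and `v` are mutually maximally distant in `G`. -/
def MMD {V : Type*} (G : SimpleGraph V) (u v : V) : Prop :=
  (∀ w, G.Adj u w → G.dist w v ≤ G.dist u v) ∧
  (∀ w, G.Adj v w → G.dist u w ≤ G.dist u v)

/-- The strong resolving graph of `G`: distinct vertices are adjacent iff MMD. -/
def strongResolvingGraph {V : Type*} (G : SimpleGraph V) : SimpleGraph V where
  Adj u v := u ≠ v ∧ MMD G u v
  symm := by
    constructor
    rintro u v ⟨hne, h1, h2⟩
    refine ⟨hne.symm, ?_, ?_⟩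
    · intro w hw
      rw [SimpleGraph.dist_comm, SimpleGraph.dist_comm (u := v)]
      exact h2 w hw
    · intro w hw
      rw [SimpleGraph.dist_comm, SimpleGraph.dist_comm (u := v)]
      exact h1 w hw
  loopless := by constructor; intro u h; exact h.1 rfl

/-- The vertex covering number `α(G)`. -/
noncomputable def vertexCoverNumber {V : Type*} (G : SimpleGraph V) : ℕ :=
  sInf {k | ∃ S : Finset V, S.card = k ∧ ∀ u v, G.Adj u v → u ∈ S ∨ v ∈ S}

/-- The independence number `β(G)`. -/
noncomputable def indepNumber {V : Type*} (G : SimpleGraph V) : ℕ :=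
  sSup {k | ∃ S : Finset V, S.card = k ∧ ∀ u ∈ S, ∀ v ∈ S, ¬ G.Adj u v}

/-- `W` is a strong resolving set of `G`. -/
def IsStrongResolvingSet {V : Type*} (G : SimpleGraph V) (W : Set V) : Prop :=
  ∀ u v : V, u ≠ v → ∃ w ∈ W,
    G.dist u w = G.dist u v + G.dist v w ∨ G.dist v w = G.dist v u + G.dist u w

/-- The strong metric dimension of `G`. -/
noncomputable def sdim {V : Type*} (G : SimpleGraph V) : ℕ :=
  sInf {k | ∃ W : Finset V, W.card = k ∧ IsStrongResolvingSet G ↑W}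

/-- Vertex set of the internal cycle `c u_{nk+1} … u_{n(k+1)+1} c` of `J(n,m)`. -/
def internalCycle (n m k : ℕ) : Set (Option (ZMod (n * m))) :=
  insert none {x | ∃ i ≤ n, x = some ((n * k + i : ℕ) : ZMod (n * m))}

/-- Cycle vertices of `J(n,m)` not adjacent to the central vertex `c` (the set `U₂`). -/
def inU2 (n m : ℕ) (x : Option (ZMod (n * m))) : Prop :=
  ∃ a : ZMod (n * m), x = some a ∧ ¬ ∃ k : ℕ, k < m ∧ a = ((n * k : ℕ) : ZMod (n * m))

private lemma jah_adj_succ {n m : ℕ} (h1 : 1 < n * m) (a : ZMod (n * m)) :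
    (jahangir n m).Adj (some a) (some (a + 1)) := by
  haveI : Fact (1 < n * m) := ⟨h1⟩
  refine Or.inr (Or.inr ⟨a, a + 1, rfl, rfl, ?_, Or.inl rfl⟩)
  intro h
  exact one_ne_zero (left_eq_add.mp h)

private lemma jah_walk_add {n m : ℕ} (h1 : 1 < n * m) (a : ZMod (n * m)) (t : ℕ) :
    ∃ p : (jahangir n m).Walk (some a) (some (a + t)), p.length = t := by
  induction t generalizing a with
  | zero => exact ⟨SimpleGraph.Walk.nil.copy rfl (by simp), by rw [SimpleGraph.Walk.length_copy]; rfl⟩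
  | succ t ih =>
    obtain ⟨p, hp⟩ := ih (a + 1)
    have hEq : some (a + 1 + (t : ZMod (n * m))) = some (a + ((t + 1 : ℕ) : ZMod (n * m))) := by
      congr 1
      push_cast
      ring
    exact ⟨(SimpleGraph.Walk.cons (jah_adj_succ h1 a) p).copy rfl hEq, by simp [hp]⟩

private lemma jah_walk_none {n m : ℕ} (hn : 0 < n) (hm : 0 < m) (h1 : 1 < n * m)
    (a : ZMod (n * m)) :
    ∃ p : (jahangir n m).Walk none (some a),
      p.length = min (a.val % n) (n - a.val % n) + 1 := by
  haveI : NeZero (n * m) := ⟨by omega⟩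
  set r := a.val % n with hr
  set q := a.val / n with hq
  have hval : a.val < n * m := ZMod.val_lt a
  have hqr : n * q + r = a.val := Nat.div_add_mod a.val n
  have hrn : r < n := Nat.mod_lt _ hn
  have hqm : q < m := by
    by_contra h
    push_neg at h
    have : n * m ≤ n * q := Nat.mul_le_mul_left n h
    omega
  have hca : ((n * q + r : ℕ) : ZMod (n * m)) = a := by
    rw [hqr]; exact ZMod.natCast_rightInverse a
  by_cases hle : r ≤ n - r
  · obtain ⟨p, hp⟩ := jah_walk_add h1 ((n * q : ℕ) : ZMod (n * m)) r
    have hadj : (jahangir n m).Adj none (some ((n * q : ℕ) : ZMod (n * m))) :=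
      Or.inl ⟨rfl, _, rfl, q, hqm, rfl⟩
    have hend : ((n * q : ℕ) : ZMod (n * m)) + (r : ℕ) = a := by
      rw [← Nat.cast_add, hca]
    refine ⟨SimpleGraph.Walk.cons hadj (p.copy rfl (by rw [hend])), ?_⟩
    simp [hp]
    omega
  · obtain ⟨p, hp⟩ := jah_walk_add h1 a (n - r)
    have hsucc : n * (q + 1) = n * q + n := Nat.mul_succ n q
    have h2 : a + ((n - r : ℕ) : ZMod (n * m)) = ((n * (q + 1) : ℕ) : ZMod (n * m)) := by
      rw [← hca, ← Nat.cast_add]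
      congr 1
      omega
    have hadj : (jahangir n m).Adj none (some (a + ((n - r : ℕ) : ZMod (n * m)))) := by
      refine Or.inl ⟨rfl, _, rfl, (q + 1) % m, Nat.mod_lt _ hm, ?_⟩
      rw [h2, ZMod.natCast_eq_natCast_iff]
      exact (Nat.ModEq.mul_left' n (Nat.mod_modEq (q + 1) m)).symm
    refine ⟨SimpleGraph.Walk.cons hadj p.reverse, ?_⟩
    simp [hp]
    omega

private lemma jah_dist_le_hub {n m : ℕ} (hn : 0 < n) (hm : 0 < m) (h1 : 1 < n * m)
    (a b : ZMod (n * m)) :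
    (jahangir n m).dist (some a) (some b) ≤
      (min (a.val % n) (n - a.val % n) + 1) + (min (b.val % n) (n - b.val % n) + 1) := by
  obtain ⟨p, hp⟩ := jah_walk_none hn hm h1 a
  obtain ⟨q, hq⟩ := jah_walk_none hn hm h1 b
  have h := SimpleGraph.dist_le (p.reverse.append q)
  simpa [hp, hq] using h

private lemma lip_walk {V : Type*} {G : SimpleGraph V} (f : V → ℤ)
    (hf : ∀ ⦃u v⦄, G.Adj u v → f u ≤ f v + 1) :
    ∀ {u v : V} (p : G.Walk u v), f u ≤ f v + p.length := by
  intro u v p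
  induction p with
  | nil => simp
  | cons h p ih =>
    simp only [SimpleGraph.Walk.length_cons]
    have := hf h
    push_cast
    linarith

private lemma mod_half {n t c : ℕ} (hc : 0 < c) (hn : n = c + c) (ht : t < n)
    (h : (t + c) % n = 0) : t = c := by
  obtain ⟨e, he⟩ := Nat.dvd_of_mod_eq_zero h
  rcases e with _ | _ | e
  · omega
  · omega
  · have h2 : n * 2 ≤ n * (e + 1 + 1) := Nat.mul_le_mul_left n (by omega)
    linarith

private lemma mod_zero' {n t c : ℕ} (hc : 0 < c) (hn : n = c + c) (ht : t < n)
    (h : (t + c) % n = c) : t = 0 := by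
  rcases lt_or_ge (t + c) n with h' | h'
  · rw [Nat.mod_eq_of_lt h'] at h
    omega
  · rw [Nat.mod_eq_sub_mod h', Nat.mod_eq_of_lt (by omega)] at h
    omega

private lemma two_n_le {n v : ℕ} (hd : n ∣ v) (h0 : v ≠ 0) (h1 : v ≠ n) : 2 * n ≤ v := by
  obtain ⟨e, rfl⟩ := hd
  rcases e with _ | _ | e
  · omega
  · omega
  · have h2 : n * 2 ≤ n * (e + 1 + 1) := Nat.mul_le_mul_left n (by omega)
    linarith

/-- key: sum-of-vals mod n -/
private lemma val_sub_add {n m : ℕ} [NeZero (n * m)] (hdvd : n ∣ n * m)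
    (a b : ZMod (n * m)) : ((a - b).val + b.val) % n = a.val % n := by
  have h1 : ((a - b).val + b.val) % (n * m) = a.val % (n * m) := by
    rw [← ZMod.val_add, sub_add_cancel, Nat.mod_eq_of_lt (ZMod.val_lt a)]
  calc ((a - b).val + b.val) % n = ((a - b).val + b.val) % (n * m) % n :=
        (Nat.mod_mod_of_dvd _ hdvd).symm
    _ = a.val % (n * m) % n := by rw [h1]
    _ = a.val % n := Nat.mod_mod_of_dvd _ hdvd

/-- if b ≡ 0 and y0 ≡ c mod n then (b - y0).val ≡ c mod n -/
private lemma val_sub_mod {n m c : ℕ} [NeZero (n * m)] (hc : 0 < c) (hn : n = c + c)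
    (b y0 : ZMod (n * m)) (hb : b.val % n = 0) (hy : y0.val % n = c) :
    (b - y0).val % n = c := by
  have hd : n ∣ n * m := ⟨m, rfl⟩
  have h := val_sub_add hd b y0
  rw [hb, Nat.add_mod, hy] at h
  exact mod_half hc hn (Nat.mod_lt _ (by omega)) h

private lemma val_sub_mod_zero {n m c : ℕ} [NeZero (n * m)] (hc : 0 < c) (hn : n = c + c)
    (b y0 : ZMod (n * m)) (hb : b.val % n = c) (hy : y0.val % n = c) :
    (b - y0).val % n = 0 := by
  have hd : n ∣ n * m := ⟨m, rfl⟩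
  have h := val_sub_add hd b y0
  rw [hb, Nat.add_mod, hy] at h
  exact mod_zero' hc hn (Nat.mod_lt _ (by omega)) h

private lemma min_ge_half {n m c v : ℕ} (hc : 0 < c) (hn : n = c + c) (hm : 0 < m)
    (hv : v < n * m) (hmod : v % n = c) : c ≤ v ∧ c ≤ n * m - v := by
  have hn0 : 0 < n := by omega
  refine ⟨hmod ▸ Nat.mod_le _ _, ?_⟩
  set w := n * m - v with hw
  have hN : (n * m) % n = 0 := Nat.mul_mod_right n m
  have h2 : (v + w) % n = 0 := by
    rw [hw, Nat.add_sub_cancel' (le_of_lt hv)]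
    exact hN
  have h3 : (w % n + c) % n = 0 := by
    rw [Nat.add_comm (w % n) c, ← hmod, ← Nat.add_mod, Nat.add_comm v w]
    rwa [Nat.add_comm v w] at h2
  have h4 : w % n = c := mod_half hc hn (Nat.mod_lt _ hn0) h3
  calc c = w % n := h4.symm
    _ ≤ w := Nat.mod_le _ _

private def jahF (n m : ℕ) (y0 : ZMod (n * m)) : Option (ZMod (n * m)) → ℤ
  | none => (n / 2 : ℕ) + 1
  | some b => min (((min ((b - y0).val) (n * m - (b - y0).val) : ℕ)) : ℤ)
      (((min (b.val % n) (n - b.val % n) : ℕ) : ℤ) + (n / 2 : ℕ) + 2)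

private lemma step_facts {n m : ℕ} (h1 : 1 < n * m) (a : ZMod (n * m)) :
    ((a + 1).val = a.val + 1 ∧ a.val + 1 < n * m) ∨
      ((a + 1).val = 0 ∧ a.val = n * m - 1) := by
  haveI : NeZero (n * m) := ⟨by omega⟩
  have hv : a.val < n * m := ZMod.val_lt a
  haveI : Fact (1 < n * m) := ⟨h1⟩
  have h2 : (a + 1).val = (a.val + 1) % (n * m) := by
    rw [ZMod.val_add, ZMod.val_one]
  rcases lt_or_ge (a.val + 1) (n * m) with h | h
  · left
    rw [h2, Nat.mod_eq_of_lt h]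
    exact ⟨rfl, h⟩
  · right
    have : a.val + 1 = n * m := by omega
    rw [h2, this, Nat.mod_self]
    omega

private lemma succ_mod_n {n N x : ℕ} (hn : 1 < n) (hd : n ∣ N) (hx : x + 1 ≤ N) :
    ((x + 1) % n = x % n + 1 ∧ x % n + 1 < n) ∨ ((x + 1) % n = 0 ∧ x % n = n - 1) := by
  have hr : x % n < n := Nat.mod_lt _ (by omega)
  have h1 : (x + 1) % n = (x % n + 1) % n := by
    conv_lhs => rw [Nat.add_mod, Nat.mod_eq_of_lt hn]
  rcases lt_or_ge (x % n + 1) n with h | h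
  · left
    rw [h1, Nat.mod_eq_of_lt h]
    exact ⟨rfl, h⟩
  · right
    have h3 : x % n = n - 1 := by omega
    refine ⟨?_, h3⟩
    rw [h1, h3, Nat.sub_add_cancel (by omega), Nat.mod_self]


private lemma last_mod {n m : ℕ} (hn : 0 < n) (hm : 0 < m) : (n * m - 1) % n = n - 1 := by
  obtain ⟨m0, rfl⟩ : ∃ m0, m = m0 + 1 := ⟨m - 1, by omega⟩
  have h1 : n * (m0 + 1) - 1 = n * m0 + (n - 1) := by
    rw [Nat.mul_add, Nat.mul_one]
    omega
  rw [h1, Nat.mul_add_mod, Nat.mod_eq_of_lt (by omega)]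

private lemma jahF_lip {n m c : ℕ} (hc : 0 < c) (hcn : n = c + c) (hm : 0 < m)
    (hnm1 : 1 < n * m) (y0 : ZMod (n * m)) (hy0 : y0.val % n = c) :
    ∀ ⦃u v⦄, (jahangir n m).Adj u v → jahF n m y0 u ≤ jahF n m y0 v + 1 := by
  haveI : NeZero (n * m) := ⟨by omega⟩
  have hn0 : 0 < n := by omega
  have hc2 : n / 2 = c := by omega
  -- bound at hub-adjacent vertices
  have hub_bound : ∀ b : ZMod (n * m), b.val % n = 0 →
      (c : ℤ) ≤ jahF n m y0 (some b) ∧ jahF n m y0 (some b) ≤ (c : ℤ) + 2 := by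
    intro b hb
    have hmod : (b - y0).val % n = c := val_sub_mod hc hcn b y0 hb hy0
    have hv : (b - y0).val < n * m := ZMod.val_lt _
    obtain ⟨hle1, hle2⟩ := min_ge_half hc hcn hm hv hmod
    simp only [jahF, hb, hc2]
    omega
  have hub_mod : ∀ j : ℕ, (((n * j : ℕ) : ZMod (n * m))).val % n = 0 := by
    intro j
    rw [ZMod.val_natCast, Nat.mod_mod_of_dvd _ ⟨m, rfl⟩, Nat.mul_mod_right]
  -- bound along cycle edges
  have succ_bound : ∀ a : ZMod (n * m),
      jahF n m y0 (some a) ≤ jahF n m y0 (some (a + 1)) + 1 ∧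
      jahF n m y0 (some (a + 1)) ≤ jahF n m y0 (some a) + 1 := by
    intro a
    have hsub : a + 1 - y0 = (a - y0) + 1 := by ring
    have hvlt : (a - y0).val < n * m := ZMod.val_lt _
    have hgm : min ((a + 1 - y0).val) (n * m - (a + 1 - y0).val) ≤
          min ((a - y0).val) (n * m - (a - y0).val) + 1 ∧
        min ((a - y0).val) (n * m - (a - y0).val) ≤
          min ((a + 1 - y0).val) (n * m - (a + 1 - y0).val) + 1 := by
      rw [hsub]
      rcases step_facts hnm1 (a - y0) with ⟨h1, h2⟩ | ⟨h1, h2⟩ <;>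
        rw [h1] <;> omega
    have hdm : min ((a + 1).val % n) (n - (a + 1).val % n) ≤
          min (a.val % n) (n - a.val % n) + 1 ∧
        min (a.val % n) (n - a.val % n) ≤
          min ((a + 1).val % n) (n - (a + 1).val % n) + 1 := by
      rcases step_facts hnm1 a with ⟨h3, h4⟩ | ⟨h3, h4⟩
      · rw [h3]
        rcases succ_mod_n (show 1 < n by omega) ⟨m, rfl⟩ (le_of_lt h4) with
          ⟨h5, h6⟩ | ⟨h5, h6⟩ <;> rw [h5] <;> omega
      · rw [h3, h4, last_mod hn0 hm]
        have : (0 : ℕ) % n = 0 := Nat.zero_mod n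
        omega
    simp only [jahF]
    omega
  -- main case split
  rintro u v (⟨hu, b, hv, j, hj, hbj⟩ | ⟨hv, b, hu, j, hj, hbj⟩ | ⟨a, b, hu, hv, hab, hor⟩)
  · subst hu hv
    have hb : b.val % n = 0 := by rw [hbj]; exact hub_mod j
    have := hub_bound b hb
    simp only [jahF, hc2]
    simp only [jahF] at this
    omega
  · subst hu hv
    have hb : b.val % n = 0 := by rw [hbj]; exact hub_mod j
    have := hub_bound b hb
    simp only [jahF, hc2]
    simp only [jahF] at this
    omega
  · subst hu hv
    rcases hor with h | h
    · subst h
      exact (succ_bound a).1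
    · subst h
      exact (succ_bound b).2

private lemma not_cast_eq {n m k k' : ℕ} (hn : 0 < n) (hm : 4 ≤ m) (hk : k < m) (hk' : k' < m)
    (h1 : ((k : ℤ) - k').natAbs ≠ 1) (h2 : ((k : ℤ) - k').natAbs ≠ m - 1) :
    ¬ ((n * k + n / 2 : ℕ) : ZMod (n * m)) = ((n + n * k' + n / 2 : ℕ) : ZMod (n * m)) := by
  intro h
  rw [ZMod.natCast_eq_natCast_iff] at h
  have hd := h.dvd
  have heq : ((n + n * k' + n / 2 : ℕ) : ℤ) - ((n * k + n / 2 : ℕ) : ℤ)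
      = (n : ℤ) * ((k' : ℤ) + 1 - k) := by push_cast; ring
  rw [heq] at hd
  have hd2 : (m : ℤ) ∣ ((k' : ℤ) + 1 - k) := by
    have hne : (n : ℤ) ≠ 0 := by exact_mod_cast hn.ne'
    rw [Nat.cast_mul] at hd
    exact (mul_dvd_mul_iff_left hne).mp hd
  obtain ⟨e, he⟩ := hd2
  have hb1 : -(m : ℤ) < (m : ℤ) * e := by
    rw [← he]; omega
  have hb2 : (m : ℤ) * e ≤ m := by
    rw [← he]; omega
  have hm0 : (0 : ℤ) ≤ m := by positivity
  have he01 : e = 0 ∨ e = 1 := by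
    rcases le_or_gt e (-1) with h' | h'
    · exfalso
      have := mul_le_mul_of_nonneg_left h' hm0
      linarith
    rcases le_or_gt 2 e with h' | h'
    · exfalso
      have := mul_le_mul_of_nonneg_left h' hm0
      linarith
    · omega
  rcases he01 with rfl | rfl
  · simp at he
    omega
  · simp at he
    omega

private lemma jah_dist_mid {n m k k' : ℕ} (hn : 5 < n) (hev : Even n) (hm : 4 ≤ m)
    (hk : k < m) (hk' : k' < m) (hkk : k ≠ k')
    (h1 : ((k : ℤ) - k').natAbs ≠ 1) (h2 : ((k : ℤ) - k').natAbs ≠ m - 1) :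
    (jahangir n m).dist (some ((n * k + n / 2 : ℕ) : ZMod (n * m)))
      (some ((n * k' + n / 2 : ℕ) : ZMod (n * m))) = n + 2 := by
  obtain ⟨c, hcn⟩ := hev
  have hc : 0 < c := by omega
  have hc2 : n / 2 = c := by omega
  have hn0 : 0 < n := by omega
  have hm0 : 0 < m := by omega
  have hnm2 : n * 2 ≤ n * m := Nat.mul_le_mul_left n (by omega)
  have hnm1 : 1 < n * m := by omega
  haveI : NeZero (n * m) := ⟨by omega⟩
  set A : ZMod (n * m) := ((n * k + n / 2 : ℕ) : ZMod (n * m)) with hA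
  set B : ZMod (n * m) := ((n * k' + n / 2 : ℕ) : ZMod (n * m)) with hB
  have hkb : ∀ j, j < m → n * j + n / 2 < n * m := by
    intro j hj
    have h3 : n * (j + 1) ≤ n * m := Nat.mul_le_mul_left n (by omega)
    rw [Nat.mul_add, Nat.mul_one] at h3
    omega
  have hAval : A.val = n * k + n / 2 := ZMod.val_natCast_of_lt (hkb k hk)
  have hBval : B.val = n * k' + n / 2 := ZMod.val_natCast_of_lt (hkb k' hk')
  have hmodA : A.val % n = c := by
    rw [hAval, Nat.mul_add_mod, Nat.mod_eq_of_lt (by omega), hc2]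
  have hmodB : B.val % n = c := by
    rw [hBval, Nat.mul_add_mod, Nat.mod_eq_of_lt (by omega), hc2]
  -- upper bound
  have hub := jah_dist_le_hub hn0 hm0 hnm1 A B
  rw [hmodA, hmodB] at hub
  have hubv : (jahangir n m).dist (some A) (some B) ≤ n + 2 := by omega
  -- reachability
  obtain ⟨p1, hp1⟩ := jah_walk_none hn0 hm0 hnm1 A
  obtain ⟨p2, hp2⟩ := jah_walk_none hn0 hm0 hnm1 B
  have hreach : (jahangir n m).Reachable (some A) (some B) := ⟨p1.reverse.append p2⟩
  obtain ⟨p, hp⟩ := hreach.exists_walk_length_eq_dist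
  have hlip := jahF_lip hc hcn hm0 hnm1 B hmodB
  have hflow := lip_walk _ hlip p
  -- value of jahF at B
  have hfB : jahF n m B (some B) = 0 := by
    simp only [jahF, sub_self, ZMod.val_zero]
    omega
  -- value of jahF at A
  have hfA : jahF n m B (some A) = (n : ℤ) + 2 := by
    have hsubmod : (A - B).val % n = 0 := val_sub_mod_zero hc hcn A B hmodA hmodB
    have hvlt : (A - B).val < n * m := ZMod.val_lt _
    have hdvd : n ∣ (A - B).val := Nat.dvd_of_mod_eq_zero hsubmod
    have hABne : A - B ≠ 0 := by
      intro h0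
      have hABeq : A = B := by rwa [sub_eq_zero] at h0
      have : A.val = B.val := by rw [hABeq]
      rw [hAval, hBval] at this
      exact hkk (Nat.eq_of_mul_eq_mul_left hn0 (by omega))
    have hne0 : (A - B).val ≠ 0 := fun h0 => hABne ((ZMod.val_eq_zero _).mp h0)
    have hnval : ((n : ℕ) : ZMod (n * m)).val = n := ZMod.val_natCast_of_lt (by omega)
    have hnen : (A - B).val ≠ n := by
      intro hvn
      have hABn : A - B = ((n : ℕ) : ZMod (n * m)) := by
        apply ZMod.val_injective
        rw [hvn, hnval]
      have heq : A = ((n : ℕ) : ZMod (n * m)) + B := by rw [← hABn]; ring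
      rw [hA, hB, ← Nat.cast_add] at heq
      refine not_cast_eq hn0 hm hk hk' h1 h2 ?_
      rw [heq]
      congr 1
      omega
    have hnen2 : n * m - (A - B).val ≠ n := by
      intro hvn
      have hBAval : (B - A).val = n * m - (A - B).val := by
        rw [show B - A = -(A - B) by ring, ZMod.neg_val, if_neg hABne]
      have hBAn : B - A = ((n : ℕ) : ZMod (n * m)) := by
        apply ZMod.val_injective
        rw [hBAval, hvn, hnval]
      have heq : B = ((n : ℕ) : ZMod (n * m)) + A := by rw [← hBAn]; ring
      rw [hA, hB, ← Nat.cast_add] at heq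
      refine not_cast_eq hn0 hm hk' hk (by omega) (by omega) ?_
      rw [heq]
      congr 1
      omega
    have h2n1 : 2 * n ≤ (A - B).val := two_n_le hdvd hne0 hnen
    have h2n2 : 2 * n ≤ n * m - (A - B).val :=
      two_n_le (Nat.dvd_sub ⟨m, rfl⟩ hdvd) (by omega) hnen2
    simp only [jahF]
    omega
  rw [hfA, hfB] at hflow
  omega

theorem stmt_7 (n m : ℕ) (hn : 5 < n) (hev : Even n) (hm : 4 ≤ m)
    (k k' : ℕ) (hk : k < m) (hk' : k' < m) (hkk : k ≠ k')
    (hshare : ((k : ℤ) - (k' : ℤ)).natAbs ≠ 1 ∧ ((k : ℤ) - (k' : ℤ)).natAbs ≠ m - 1)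
    (x y : Option (ZMod (n * m)))
    (hx : x ∈ internalCycle n m k) (hy : y ∈ internalCycle n m k') :
    (jahangir n m).dist x y = n + 2 ↔
      ({x, y} : Set (Option (ZMod (n * m)))) =
        {some ((n * k + n / 2 : ℕ) : ZMod (n * m)), some ((n * k' + n / 2 : ℕ) : ZMod (n * m))} := by
  obtain ⟨c, hcn⟩ := id hev
  have hc : 0 < c := by omega
  have hc2 : n / 2 = c := by omega
  have hn0 : 0 < n := by omega
  have hm0 : 0 < m := by omega
  have hnm2 : n * 2 ≤ n * m := Nat.mul_le_mul_left n (by omega)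
  have hnm1 : 1 < n * m := by omega
  haveI : NeZero (n * m) := ⟨by omega⟩
  simp only [internalCycle, Set.mem_insert_iff, Set.mem_setOf_eq] at hx hy
  constructor
  · intro hd
    have hnone : ∀ b : ZMod (n * m), (jahangir n m).dist none (some b) ≤ n + 1 := by
      intro b
      obtain ⟨p, hp⟩ := jah_walk_none hn0 hm0 hnm1 b
      have h3 := SimpleGraph.dist_le p
      have hb : b.val % n < n := Nat.mod_lt _ hn0
      omega
    rcases hx with rfl | ⟨i, hi, rfl⟩
    · rcases hy with rfl | ⟨j, hj, rfl⟩
      · rw [SimpleGraph.dist_self] at hd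
        omega
      · have := hnone ((n * k' + j : ℕ) : ZMod (n * m))
        omega
    · rcases hy with rfl | ⟨j, hj, rfl⟩
      · rw [SimpleGraph.dist_comm] at hd
        have := hnone ((n * k + i : ℕ) : ZMod (n * m))
        omega
      · have hvx : ((n * k + i : ℕ) : ZMod (n * m)).val % n = i % n := by
          rw [ZMod.val_natCast, Nat.mod_mod_of_dvd _ ⟨m, rfl⟩, Nat.mul_add_mod]
        have hvy : ((n * k' + j : ℕ) : ZMod (n * m)).val % n = j % n := by
          rw [ZMod.val_natCast, Nat.mod_mod_of_dvd _ ⟨m, rfl⟩, Nat.mul_add_mod]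
        have hub := jah_dist_le_hub hn0 hm0 hnm1
          ((n * k + i : ℕ) : ZMod (n * m)) ((n * k' + j : ℕ) : ZMod (n * m))
        rw [hvx, hvy] at hub
        have hilt : i % n < n := Nat.mod_lt _ hn0
        have hjlt : j % n < n := Nat.mod_lt _ hn0
        have him : i % n = c ∧ j % n = c := by omega
        have hieq : i = c := by
          rcases Nat.lt_or_ge i n with h' | h'
          · rw [Nat.mod_eq_of_lt h'] at him
            exact him.1
          · have : i = n := by omega
            subst this
            rw [Nat.mod_self] at him
            omega
        have hjeq : j = c := by
          rcases Nat.lt_or_ge j n with h' | h'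
          · rw [Nat.mod_eq_of_lt h'] at him
            exact him.2
          · have : j = n := by omega
            subst this
            rw [Nat.mod_self] at him
            omega
        rw [hieq, hjeq, hc2]
  · intro hset
    rcases Set.pair_eq_pair_iff.mp hset with ⟨rfl, rfl⟩ | ⟨rfl, rfl⟩
    · exact jah_dist_mid hn hev hm hk hk' hkk hshare.1 hshare.2
    · rw [SimpleGraph.dist_comm]
      exact jah_dist_mid hn hev hm hk hk' hkk hshare.1 hshare.2
end

section
/- Let n > 5 be even and m ≥ 4. In J(n,m), two vertices x and y lying on internal cycles C and C' that share exactly one edge are mutually maximally distant if and only if d(x,y) = n+1. -/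
set_option linter.unusedSectionVars false
set_option maxHeartbeats 1000000


namespace JAux

def ee (n N : ℕ) (a : ZMod N) : ℕ := min (a.val % n) (n - a.val % n)

def cyc {N : ℕ} (a b : ZMod N) : ℕ := min (b - a).val (a - b).val

def DD (n m : ℕ) : Option (ZMod (n*m)) → Option (ZMod (n*m)) → ℕ
  | none, none => 0
  | none, some b => 1 + ee n (n*m) b
  | some a, none => 1 + ee n (n*m) a
  | some a, some b => min (cyc a b) (ee n (n*m) a + ee n (n*m) b + 2)

section
variable {n m : ℕ} (hn : 5 < n) (hm : 4 ≤ m)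
include hn hm

lemma NN : 24 ≤ n * m := by nlinarith

lemma neZero : NeZero (n * m) := ⟨by have := NN hn hm; omega⟩

lemma cast_val (z : ZMod (n*m)) : ((z.val : ℕ) : ZMod (n*m)) = z := by
  haveI := neZero hn hm
  exact ZMod.natCast_rightInverse z

lemma val_cast (t : ℕ) : ((t : ZMod (n*m))).val = t % (n*m) := by
  haveI := neZero hn hm
  exact ZMod.val_natCast (n*m) t

lemma val_cast_lt {t : ℕ} (h : t < n*m) : ((t : ZMod (n*m))).val = t := by
  rw [val_cast hn hm, Nat.mod_eq_of_lt h]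

lemma cast_sub_cast {s t : ℕ} (h : t ≤ s) :
    ((s : ZMod (n*m)) - t) = ((s - t : ℕ) : ZMod (n*m)) := by
  push_cast [Nat.cast_sub h]; ring

lemma val_neg (z : ZMod (n*m)) : (-z).val = (n*m - z.val) % (n*m) := by
  haveI := neZero hn hm
  rw [ZMod.neg_val]
  have hz := ZMod.val_lt z
  split
  · next h => subst h; simp [ZMod.val_zero, Nat.mod_self]
  · next h =>
    have : z.val ≠ 0 := fun hh => h (by
      have := cast_val hn hm z
      rw [hh] at this; simpa using this.symm)
    rw [Nat.mod_eq_of_lt (by omega)]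

lemma val_add_one (z : ZMod (n*m)) :
    (z + 1).val = if z.val + 1 = n*m then 0 else z.val + 1 := by
  haveI := neZero hn hm
  have h1 : z + 1 = ((z.val + 1 : ℕ) : ZMod (n*m)) := by
    conv_lhs => rw [← cast_val hn hm z]
    push_cast; ring
  have hz := ZMod.val_lt z
  rw [h1, val_cast hn hm]
  split
  · next h => rw [h, Nat.mod_self]
  · next h => exact Nat.mod_eq_of_lt (by omega)

lemma val_sub_one (z : ZMod (n*m)) :
    (z - 1).val = if z.val = 0 then n*m - 1 else z.val - 1 := by
  haveI := neZero hn hm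
  have hz := ZMod.val_lt z
  have hN := NN hn hm
  split
  · next h =>
    have hz0 : z = 0 := by rw [← cast_val hn hm z, h]; simp
    subst hz0
    have : (0 : ZMod (n*m)) - 1 = ((n*m - 1 : ℕ) : ZMod (n*m)) := by
      rw [Nat.cast_sub (by omega : 1 ≤ n*m), ZMod.natCast_self]
      push_cast; ring
    rw [this, val_cast_lt hn hm (by omega)]
  · next h =>
    have h1 : z - 1 = ((z.val - 1 : ℕ) : ZMod (n*m)) := by
      conv_lhs => rw [← cast_val hn hm z]
      rw [← cast_sub_cast hn hm (by omega : 1 ≤ z.val)]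
      norm_num
    rw [h1, val_cast_lt hn hm (by omega)]

lemma mod_helper {r : ℕ} (q : ℕ) (hr : r < n) : (n*q + r) % n = r := by
  rw [Nat.add_comm, Nat.add_mul_mod_self_left, Nat.mod_eq_of_lt hr]

lemma ee_cast (t : ℕ) : ee n (n*m) ((t : ZMod (n*m))) = min (t % n) (n - t % n) := by
  unfold ee; rw [val_cast hn hm, Nat.mod_mod_of_dvd _ (dvd_mul_right n m)]

lemma last_mod : (n*m - 1) % n = n - 1 := by
  have h : n*m - 1 = n*(m-1) + (n-1) := by
    have h2 : n*(m-1) + n = n*m := by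
      rw [← Nat.mul_succ]
      congr 1
      omega
    omega
  rw [h, mod_helper hn hm _ (by omega)]

lemma ee_lip (a : ZMod (n*m)) :
    ee n (n*m) (a+1) ≤ ee n (n*m) a + 1 ∧ ee n (n*m) a ≤ ee n (n*m) (a+1) + 1 := by
  haveI := neZero hn hm
  have hv := ZMod.val_lt a
  have h1 := val_add_one hn hm a
  have hr : a.val % n < n := Nat.mod_lt _ (by omega)
  unfold ee
  rw [h1]
  split
  · next hc =>
    have hval : a.val % n = n - 1 := by
      have : a.val = n*m - 1 := by omega
      rw [this, last_mod hn hm]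
    rw [hval]
    simp only [Nat.zero_mod]
    omega
  · next hc =>
    have hmod : (a.val + 1) % n = (a.val % n + 1) % n := by
      conv_lhs => rw [Nat.add_mod, Nat.mod_eq_of_lt (show (1:ℕ) < n by omega)]
    by_cases hrn : a.val % n + 1 = n
    · rw [hmod, hrn, Nat.mod_self]; omega
    · rw [hmod, Nat.mod_eq_of_lt (by omega)]; omega

lemma ee_desc (a : ZMod (n*m)) (h : 1 ≤ ee n (n*m) a) :
    ∃ b : ZMod (n*m), (b = a + 1 ∨ b = a - 1) ∧ ee n (n*m) b + 1 ≤ ee n (n*m) a := by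
  haveI := neZero hn hm
  have hv := ZMod.val_lt a
  have hr : a.val % n < n := Nat.mod_lt _ (by omega)
  have hr1 : 1 ≤ a.val % n := by unfold ee at h; omega
  rcases le_or_gt (a.val % n) (n - a.val % n) with hc | hc
  · refine ⟨a - 1, Or.inr rfl, ?_⟩
    have hv1 : a.val ≠ 0 := by intro h0; rw [h0] at hr1; simp at hr1
    have h1 : (a - 1).val = a.val - 1 := by rw [val_sub_one hn hm]; simp [hv1]
    have h2 : (a.val - 1) % n = a.val % n - 1 := by
      have hd := Nat.div_add_mod a.val n
      have : a.val - 1 = n*(a.val/n) + (a.val % n - 1) := by omega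
      rw [this, mod_helper hn hm _ (by omega)]
    unfold ee
    rw [h1, h2]
    omega
  · refine ⟨a + 1, Or.inl rfl, ?_⟩
    have h1 := val_add_one hn hm a
    unfold ee
    rw [h1]
    split
    · next hcc =>
      simp only [Nat.zero_mod]
      unfold ee at h
      omega
    · next hcc =>
      have hmod : (a.val + 1) % n = (a.val % n + 1) % n := by
        conv_lhs => rw [Nat.add_mod, Nat.mod_eq_of_lt (show (1:ℕ) < n by omega)]
      by_cases hrn : a.val % n + 1 = n
      · rw [hmod, hrn, Nat.mod_self]
        unfold ee at h
        omega
      · rw [hmod, Nat.mod_eq_of_lt (by omega)]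
        omega

lemma ee_hub (k' : ℕ) : ee n (n*m) ((n*k' : ℕ) : ZMod (n*m)) = 0 := by
  rw [ee_cast hn hm, Nat.mul_mod_right]
  simp

lemma hub_of_ee {a : ZMod (n*m)} (h : ee n (n*m) a = 0) :
    ∃ k' : ℕ, k' < m ∧ a = ((n*k' : ℕ) : ZMod (n*m)) := by
  haveI := neZero hn hm
  have hv := ZMod.val_lt a
  have hr : a.val % n < n := Nat.mod_lt _ (by omega)
  have hr0 : a.val % n = 0 := by unfold ee at h; omega
  refine ⟨a.val / n, ?_, ?_⟩
  · rw [Nat.div_lt_iff_lt_mul (by omega : 0 < n)]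
    have : n*m = m*n := Nat.mul_comm n m
    omega
  · conv_lhs => rw [← cast_val hn hm a]
    congr 1
    have hd := Nat.div_add_mod a.val n
    omega

lemma cyc_self (a : ZMod (n*m)) : cyc a a = 0 := by simp [cyc]

lemma cyc_lip (a b : ZMod (n*m)) :
    cyc (a+1) b ≤ cyc a b + 1 ∧ cyc a b ≤ cyc (a+1) b + 1 := by
  haveI := neZero hn hm
  have hN := NN hn hm
  have e1 : a - b = -(b - a) := by ring
  have e2 : b - (a+1) = (b - a) - 1 := by ring
  have e3 : (a+1) - b = -((b - a) - 1) := by ring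
  unfold cyc
  rw [e1, e2, e3]
  have ht := ZMod.val_lt (b - a)
  have h1 := val_sub_one hn hm (b - a)
  have h2 := val_neg hn hm (b - a)
  have h3 := val_neg hn hm ((b - a) - 1)
  by_cases h0 : (b - a).val = 0
  · have e4 : ((b-a) - 1).val = n*m - 1 := by rw [h1]; simp [h0]
    have e5 : (-(b-a)).val = 0 := by rw [h2, h0, Nat.sub_zero, Nat.mod_self]
    have e6 : (-((b-a) - 1)).val = 1 := by
      rw [h3, e4]
      rw [Nat.mod_eq_of_lt] <;> omega
    omega
  · have e5 : (-(b-a)).val = n*m - (b-a).val := by rw [h2, Nat.mod_eq_of_lt (by omega)]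
    have e4 : ((b-a) - 1).val = (b-a).val - 1 := by rw [h1]; simp [h0]
    by_cases h01 : (b-a).val = 1
    · have e6 : (-((b-a) - 1)).val = 0 := by
        rw [h3, e4, h01]
        simp [Nat.mod_self]
      omega
    · have e6 : (-((b-a) - 1)).val = n*m - ((b-a).val - 1) := by
        rw [h3, e4, Nat.mod_eq_of_lt (by omega)]
      omega

lemma cyc_pos (a b : ZMod (n*m)) (hab : a ≠ b) :
    1 ≤ (b - a).val ∧ 1 ≤ (a - b).val := by
  haveI := neZero hn hm
  constructor
  · rcases Nat.eq_zero_or_pos (b - a).val with h | h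
    · exfalso
      have : b - a = 0 := by rw [← cast_val hn hm (b - a), h]; simp
      exact hab (sub_eq_zero.mp this).symm
    · exact h
  · rcases Nat.eq_zero_or_pos (a - b).val with h | h
    · exfalso
      have : a - b = 0 := by rw [← cast_val hn hm (a - b), h]; simp
      exact hab (sub_eq_zero.mp this)
    · exact h

lemma cyc_desc (a b : ZMod (n*m)) (hab : a ≠ b) :
    ∃ c : ZMod (n*m), (c = a + 1 ∨ c = a - 1) ∧ cyc c b + 1 ≤ cyc a b := by
  haveI := neZero hn hm
  obtain ⟨ht, hs⟩ := cyc_pos hn hm a b hab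
  rcases le_or_gt (b - a).val ((a - b).val) with h | h
  · refine ⟨a + 1, Or.inl rfl, ?_⟩
    have e2 : b - (a+1) = (b - a) - 1 := by ring
    have h1 : (b - (a+1)).val = (b - a).val - 1 := by
      rw [e2, val_sub_one hn hm]
      simp [show (b-a).val ≠ 0 by omega]
    have h2 : cyc (a+1) b ≤ (b - a).val - 1 := by
      rw [← h1]; exact min_le_left _ _
    have h3 : cyc a b = (b - a).val := by unfold cyc; omega
    omega
  · refine ⟨a - 1, Or.inr rfl, ?_⟩
    have e2 : (a-1) - b = (a - b) - 1 := by ring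
    have h1 : ((a-1) - b).val = (a - b).val - 1 := by
      rw [e2, val_sub_one hn hm]
      simp [show (a-b).val ≠ 0 by omega]
    have h2 : cyc (a-1) b ≤ (a - b).val - 1 := by
      rw [← h1]; exact min_le_right _ _
    have h3 : cyc a b = (a - b).val := by unfold cyc; omega
    omega

lemma val_zmodn (z : ZMod (n*m)) :
    ((z.val : ℕ) : ZMod n) = (ZMod.castHom (dvd_mul_right n m) (ZMod n)) z := by
  haveI := neZero hn hm
  haveI : NeZero n := ⟨by omega⟩
  rw [ZMod.castHom_apply, ZMod.natCast_val]

lemma hub_maps_zero (k' : ℕ) :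
    (ZMod.castHom (dvd_mul_right n m) (ZMod n)) (((n*k' : ℕ) : ZMod (n*m))) = 0 := by
  rw [map_natCast]
  push_cast
  simp [ZMod.natCast_self]

lemma sub_hub_mod (k' : ℕ) (b : ZMod (n*m)) :
    (b - ((n*k' : ℕ) : ZMod (n*m))).val % n = b.val % n := by
  apply (ZMod.natCast_eq_natCast_iff _ _ _).mp
  rw [val_zmodn hn hm, val_zmodn hn hm, map_sub, hub_maps_zero hn hm, sub_zero]

lemma hub_sub_mod (k' : ℕ) (b : ZMod (n*m)) :
    (((n*k' : ℕ) : ZMod (n*m)) - b).val % n = (n - b.val % n) % n := by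
  haveI := neZero hn hm
  apply (ZMod.natCast_eq_natCast_iff _ _ _).mp
  rw [val_zmodn hn hm, map_sub, hub_maps_zero hn hm, zero_sub, ← val_zmodn hn hm b]
  have hr : b.val % n < n := Nat.mod_lt _ (by omega)
  have h2 : ((b.val % n : ℕ) : ZMod n) = ((b.val : ℕ) : ZMod n) := ZMod.natCast_mod _ _
  have h3 : ((n - b.val % n : ℕ) : ZMod n) + ((b.val % n : ℕ) : ZMod n) = 0 := by
    rw [← Nat.cast_add]
    have : n - b.val % n + b.val % n = n := by omega
    rw [this, ZMod.natCast_self]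
  rw [← h2]
  linear_combination -h3

lemma cyc_hub_ge (k' : ℕ) (b : ZMod (n*m)) :
    ee n (n*m) b ≤ cyc (((n*k' : ℕ) : ZMod (n*m))) b := by
  haveI := neZero hn hm
  have hr : b.val % n < n := Nat.mod_lt _ (by omega)
  have h1 := sub_hub_mod hn hm k' b
  have h2 := hub_sub_mod hn hm k' b
  unfold ee cyc
  by_cases h0 : b.val % n = 0
  · simp [h0]
  · have ht : b.val % n ≤ (b - ((n*k' : ℕ) : ZMod (n*m))).val := by
      calc b.val % n = _ % n := h1.symm
        _ ≤ _ := Nat.mod_le _ _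
    have hs : n - b.val % n ≤ (((n*k' : ℕ) : ZMod (n*m)) - b).val := by
      rw [show (n - b.val % n) % n = n - b.val % n from Nat.mod_eq_of_lt (by omega)] at h2
      calc n - b.val % n = (((n*k' : ℕ) : ZMod (n*m)) - b).val % n := h2.symm
        _ ≤ _ := Nat.mod_le _ _
    omega

lemma near_hub (b : ZMod (n*m)) :
    ∃ w : ZMod (n*m), (∃ k' : ℕ, k' < m ∧ w = ((n*k' : ℕ) : ZMod (n*m))) ∧
      cyc w b ≤ ee n (n*m) b := by
  haveI := neZero hn hm
  obtain ⟨v, hvlt, rfl⟩ : ∃ v, v < n*m ∧ b = ((v:ℕ) : ZMod (n*m)) :=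
    ⟨b.val, ZMod.val_lt b, (cast_val hn hm b).symm⟩
  have hr : v % n < n := Nat.mod_lt _ (by omega)
  have hd := Nat.div_add_mod v n
  have hq : v / n < m := by
    rw [Nat.div_lt_iff_lt_mul (by omega : 0 < n)]
    have : n*m = m*n := Nat.mul_comm n m
    omega
  have hee : ee n (n*m) ((v:ℕ) : ZMod (n*m)) = min (v % n) (n - v % n) := ee_cast hn hm v
  rcases le_or_gt (v % n) (n - v % n) with hc | hc
  · refine ⟨((n*(v/n) : ℕ) : ZMod (n*m)), ⟨v/n, hq, rfl⟩, ?_⟩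
    have h1 : ((v:ℕ) : ZMod (n*m)) - ((n*(v/n) : ℕ) : ZMod (n*m))
        = ((v - n*(v/n) : ℕ) : ZMod (n*m)) := cast_sub_cast hn hm (by omega)
    have h2 : (((v:ℕ) : ZMod (n*m)) - ((n*(v/n) : ℕ) : ZMod (n*m))).val = v % n := by
      rw [h1, val_cast_lt hn hm (by omega)]
      omega
    calc cyc ((n*(v/n) : ℕ) : ZMod (n*m)) ((v:ℕ) : ZMod (n*m))
        ≤ (((v:ℕ) : ZMod (n*m)) - ((n*(v/n) : ℕ) : ZMod (n*m))).val := min_le_left _ _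
      _ = v % n := h2
      _ ≤ ee n (n*m) ((v:ℕ) : ZMod (n*m)) := by rw [hee]; omega
  · have hmul : n*(v/n + 1) = n*(v/n) + n := by ring
    have hble : v ≤ n*(v/n + 1) := by omega
    refine ⟨((n*(v/n + 1) : ℕ) : ZMod (n*m)), ?_, ?_⟩
    · rcases Nat.lt_or_ge (v/n + 1) m with hql | hql
      · exact ⟨v/n + 1, hql, rfl⟩
      · refine ⟨0, by omega, ?_⟩
        rw [show v/n + 1 = m from by omega]
        simp [ZMod.natCast_self]
    · have h1 : ((n*(v/n+1) : ℕ) : ZMod (n*m)) - ((v:ℕ) : ZMod (n*m))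
          = ((n*(v/n+1) - v : ℕ) : ZMod (n*m)) := cast_sub_cast hn hm hble
      have hsub : n*(v/n+1) - v = n - v % n := by omega
      have h2 : (((n*(v/n+1) : ℕ) : ZMod (n*m)) - ((v:ℕ) : ZMod (n*m))).val = n - v % n := by
        rw [h1, hsub, val_cast_lt hn hm (by omega)]
      calc cyc ((n*(v/n+1) : ℕ) : ZMod (n*m)) ((v:ℕ) : ZMod (n*m))
          ≤ (((n*(v/n+1) : ℕ) : ZMod (n*m)) - ((v:ℕ) : ZMod (n*m))).val := min_le_right _ _
        _ = n - v % n := h2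
        _ ≤ ee n (n*m) ((v:ℕ) : ZMod (n*m)) := by rw [hee]; omega

lemma one_ne_zero' : (1 : ZMod (n*m)) ≠ 0 := by
  haveI := neZero hn hm
  intro h
  have h1 : ((1:ℕ) : ZMod (n*m)).val = 1 := val_cast_lt hn hm (by have := NN hn hm; omega)
  rw [Nat.cast_one, h] at h1
  simp at h1

lemma succ_ne (a : ZMod (n*m)) : a ≠ a + 1 := by
  intro h
  have : (1 : ZMod (n*m)) = 0 := by linear_combination -h
  exact one_ne_zero' hn hm this

lemma pred_ne (a : ZMod (n*m)) : a ≠ a - 1 := by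
  intro h
  have : (1 : ZMod (n*m)) = 0 := by linear_combination h
  exact one_ne_zero' hn hm this

lemma adj_succ (a : ZMod (n*m)) : (jahangir n m).Adj (some a) (some (a+1)) :=
  Or.inr (Or.inr ⟨a, a+1, rfl, rfl, succ_ne hn hm a, Or.inl rfl⟩)

lemma adj_pred (a : ZMod (n*m)) : (jahangir n m).Adj (some a) (some (a-1)) :=
  Or.inr (Or.inr ⟨a, a-1, rfl, rfl, pred_ne hn hm a, Or.inr (by ring)⟩)

lemma adj_hub {k' : ℕ} (hk' : k' < m) :
    (jahangir n m).Adj none (some ((n*k' : ℕ) : ZMod (n*m))) :=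
  Or.inl ⟨rfl, _, rfl, k', hk', rfl⟩

lemma adj_some_none {a : ZMod (n*m)} (h : ∃ k' : ℕ, k' < m ∧ a = ((n*k' : ℕ) : ZMod (n*m))) :
    (jahangir n m).Adj (some a) none := by
  obtain ⟨k', hk', ha⟩ := h
  exact Or.inr (Or.inl ⟨rfl, a, rfl, k', hk', ha⟩)

lemma adj_some_iff {a : ZMod (n*m)} {w : Option (ZMod (n*m))} :
    (jahangir n m).Adj (some a) w ↔
      w = some (a+1) ∨ w = some (a-1) ∨
        (w = none ∧ ∃ k' : ℕ, k' < m ∧ a = ((n*k' : ℕ) : ZMod (n*m))) := by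
  constructor
  · rintro (⟨h, -⟩ | ⟨hw, a', ha', k', hk', hh⟩ | ⟨a', b', ha', hw, hab, hor⟩)
    · exact absurd h (by simp)
    · exact Or.inr (Or.inr ⟨hw, k', hk', by rwa [Option.some_inj.mp ha']⟩)
    · obtain rfl : a = a' := Option.some_inj.mp ha'
      rcases hor with h1 | h1
      · exact Or.inl (by rw [hw, h1])
      · refine Or.inr (Or.inl ?_)
        rw [hw]
        congr 1
        linear_combination -h1
  · rintro (rfl | rfl | ⟨rfl, hk⟩)
    · exact adj_succ hn hm a
    · exact adj_pred hn hm a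
    · exact adj_some_none hn hm hk

omit hn hm in
lemma DD_self (x : Option (ZMod (n*m))) : DD n m x x = 0 := by
  cases x with
  | none => rfl
  | some a => simp [DD, cyc]

lemma DD_pos {x y : Option (ZMod (n*m))} (h : x ≠ y) : 1 ≤ DD n m x y := by
  cases x with
  | none =>
    cases y with
    | none => exact absurd rfl h
    | some b => simp [DD]
  | some a =>
    cases y with
    | none => simp [DD]
    | some b =>
      have hab : a ≠ b := fun hh => h (by rw [hh])
      obtain ⟨h1, h2⟩ := cyc_pos hn hm a b hab
      simp only [DD]
      unfold cyc
      omega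

lemma DD_lip (y u v : Option (ZMod (n*m))) (h : (jahangir n m).Adj u v) :
    DD n m u y ≤ DD n m v y + 1 := by
  rcases h with ⟨hu, a, hv, k', hk', ha⟩ | ⟨hv, a, hu, k', hk', ha⟩ | ⟨a, b, hu, hv, hab, hor⟩
  · subst hu hv ha
    cases y with
    | none => simp [DD]
    | some b =>
      have h1 := cyc_hub_ge hn hm k' b
      have h2 := ee_hub hn hm k'
      simp only [DD]
      omega
  · subst hv hu ha
    cases y with
    | none =>
      have h2 := ee_hub hn hm k'
      simp only [DD]
      omega
    | some b =>
      have h2 := ee_hub hn hm k'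
      simp only [DD]
      omega
  · subst hu hv
    rcases hor with rfl | rfl
    · cases y with
      | none =>
        have := (ee_lip hn hm a).2
        simp only [DD]
        omega
      | some c =>
        have h1 := (cyc_lip hn hm a c).2
        have h2 := (ee_lip hn hm a).2
        simp only [DD]
        omega
    · cases y with
      | none =>
        have := (ee_lip hn hm b).1
        simp only [DD]
        omega
      | some c =>
        have h1 := (cyc_lip hn hm b c).1
        have h2 := (ee_lip hn hm b).1
        simp only [DD]
        omega

lemma DD_desc (x y : Option (ZMod (n*m))) (hxy : x ≠ y) :
    ∃ w, (jahangir n m).Adj x w ∧ DD n m w y + 1 ≤ DD n m x y := by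
  cases x with
  | none =>
    cases y with
    | none => exact absurd rfl hxy
    | some b =>
      obtain ⟨w, hw, hcyc⟩ := near_hub hn hm b
      obtain ⟨k', hk', rfl⟩ := hw
      refine ⟨some _, adj_hub hn hm hk', ?_⟩
      simp only [DD]
      unfold cyc at hcyc ⊢
      omega
  | some a =>
    cases y with
    | none =>
      by_cases hea : 1 ≤ ee n (n*m) a
      · obtain ⟨b, hb, hlt⟩ := ee_desc hn hm a hea
        refine ⟨some b, ?_, by simp only [DD]; omega⟩
        rcases hb with rfl | rfl
        · exact adj_succ hn hm a
        · exact adj_pred hn hm a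
      · have : ee n (n*m) a = 0 := by omega
        refine ⟨none, adj_some_none hn hm (hub_of_ee hn hm this), ?_⟩
        simp only [DD]
        omega
    | some b =>
      have hab : a ≠ b := fun hh => hxy (by rw [hh])
      rcases le_or_gt (cyc a b) (ee n (n*m) a + ee n (n*m) b + 2) with hc | hc
      · obtain ⟨c, hcc, hlt⟩ := cyc_desc hn hm a b hab
        refine ⟨some c, ?_, ?_⟩
        · rcases hcc with rfl | rfl
          · exact adj_succ hn hm a
          · exact adj_pred hn hm a
        · have h1 : DD n m (some c) (some b) ≤ cyc c b := min_le_left _ _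
          have h2 : DD n m (some a) (some b) = cyc a b := by simp only [DD]; omega
          omega
      · by_cases hea : 1 ≤ ee n (n*m) a
        · obtain ⟨c, hcc, hlt⟩ := ee_desc hn hm a hea
          refine ⟨some c, ?_, ?_⟩
          · rcases hcc with rfl | rfl
            · exact adj_succ hn hm a
            · exact adj_pred hn hm a
          · have h1 : DD n m (some c) (some b) ≤ ee n (n*m) c + ee n (n*m) b + 2 :=
              min_le_right _ _
            have h2 : DD n m (some a) (some b) = ee n (n*m) a + ee n (n*m) b + 2 := by
              simp only [DD]; omega
            omega
        · have h0 : ee n (n*m) a = 0 := by omega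
          refine ⟨none, adj_some_none hn hm (hub_of_ee hn hm h0), ?_⟩
          have h2 : DD n m (some a) (some b) = ee n (n*m) a + ee n (n*m) b + 2 := by
            simp only [DD]; omega
          simp only [DD]
          omega

lemma walk_of_DD : ∀ (c : ℕ) (x y : Option (ZMod (n*m))), DD n m x y ≤ c →
    ∃ p : (jahangir n m).Walk x y, p.length ≤ c := by
  intro c
  induction c with
  | zero =>
    intro x y h
    by_cases hxy : x = y
    · subst hxy; exact ⟨SimpleGraph.Walk.nil, by simp⟩
    · exact absurd h (by have := DD_pos hn hm hxy; omega)
  | succ c ih =>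
    intro x y h
    by_cases hxy : x = y
    · subst hxy; exact ⟨SimpleGraph.Walk.nil, by simp⟩
    · obtain ⟨w, hadj, hw⟩ := DD_desc hn hm x y hxy
      obtain ⟨p, hp⟩ := ih w y (by omega)
      exact ⟨SimpleGraph.Walk.cons hadj p, by simp [SimpleGraph.Walk.length_cons]; omega⟩

lemma DD_le_walk : ∀ {x y : Option (ZMod (n*m))} (p : (jahangir n m).Walk x y),
    DD n m x y ≤ p.length := by
  intro x y p
  induction p with
  | nil => rw [DD_self]; simp
  | @cons u w y hadj p ih =>
    have := DD_lip hn hm y u w hadj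
    simp only [SimpleGraph.Walk.length_cons]
    omega

lemma dist_eq (x y : Option (ZMod (n*m))) : (jahangir n m).dist x y = DD n m x y := by
  apply le_antisymm
  · obtain ⟨p, hp⟩ := walk_of_DD hn hm (DD n m x y) x y le_rfl
    exact le_trans (SimpleGraph.dist_le p) hp
  · have hreach : (jahangir n m).Reachable x y :=
      ⟨(walk_of_DD hn hm (DD n m x y) x y le_rfl).choose⟩
    obtain ⟨p, hp⟩ := hreach.exists_walk_length_eq_dist
    rw [← hp]
    exact DD_le_walk hn hm p

lemma cast_pred (s : ℕ) (hs : 1 ≤ s) :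
    ((s : ℕ) : ZMod (n*m)) - 1 = ((s - 1 : ℕ) : ZMod (n*m)) := by
  have h := cast_sub_cast (n := n) (m := m) hn hm (t := 1) hs
  simpa using h

lemma ee_pos (k i : ℕ) (hi : i ≤ n) :
    ee n (n*m) ((n*k+i : ℕ) : ZMod (n*m)) = min i (n - i) := by
  rw [ee_cast hn hm]
  rw [show (n*k+i) % n = i % n from by rw [Nat.add_comm, Nat.add_mul_mod_self_left]]
  rcases Nat.lt_or_ge i n with h | h
  · rw [Nat.mod_eq_of_lt h]
  · have : i = n := by omega
    subst this
    rw [Nat.mod_self]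
    omega

lemma not_hub (k i : ℕ) (h1 : 1 ≤ i) (h2 : i < n) :
    ¬ ∃ k' : ℕ, k' < m ∧ ((n*k+i : ℕ) : ZMod (n*m)) = ((n*k' : ℕ) : ZMod (n*m)) := by
  rintro ⟨k', hk', he⟩
  have h3 := ee_pos hn hm k i (le_of_lt h2)
  rw [he, ee_hub hn hm] at h3
  omega

lemma cyc_pos_pos (k i j : ℕ) (hi : i ≤ n) (hj : j ≤ n) :
    cyc ((n*k+i : ℕ) : ZMod (n*m)) ((n*(k+1)+j : ℕ) : ZMod (n*m)) = n + j - i := by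
  haveI := neZero hn hm
  have h4 : n*4 ≤ n*m := Nat.mul_le_mul_left n hm
  have hexp : n*(k+1) = n*k + n := by ring
  have hle : n*k+i ≤ n*(k+1)+j := by omega
  have hdiff : n*(k+1)+j - (n*k+i) = n + j - i := by omega
  have h1 : ((n*(k+1)+j : ℕ) : ZMod (n*m)) - ((n*k+i : ℕ) : ZMod (n*m))
      = ((n+j-i : ℕ) : ZMod (n*m)) := by rw [cast_sub_cast hn hm hle, hdiff]
  have hv1 : (((n*(k+1)+j : ℕ) : ZMod (n*m)) - ((n*k+i : ℕ) : ZMod (n*m))).val = n+j-i := by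
    rw [h1, val_cast_lt hn hm (by omega)]
  have h2 : ((n*k+i : ℕ) : ZMod (n*m)) - ((n*(k+1)+j : ℕ) : ZMod (n*m))
      = -(((n*(k+1)+j : ℕ) : ZMod (n*m)) - ((n*k+i : ℕ) : ZMod (n*m))) := by ring
  have hv2 := val_neg hn hm (((n*(k+1)+j : ℕ) : ZMod (n*m)) - ((n*k+i : ℕ) : ZMod (n*m)))
  rw [hv1] at hv2
  unfold cyc
  rw [h2, hv1, hv2]
  by_cases h0 : n + j - i = 0
  · rw [h0]
    simp [Nat.mod_self]
  · rw [Nat.mod_eq_of_lt (by omega)]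
    omega

lemma DD_pos_pos (k i j : ℕ) (hi : i ≤ n) (hj : j ≤ n) :
    DD n m (some ((n*k+i : ℕ) : ZMod (n*m))) (some ((n*(k+1)+j : ℕ) : ZMod (n*m)))
      = min (n + j - i) (min i (n - i) + min j (n - j) + 2) := by
  simp only [DD]
  rw [cyc_pos_pos hn hm k i j hi hj, ee_pos hn hm k i hi, ee_pos hn hm (k+1) j hj]

end
end JAux


theorem stmt_9 (n m : ℕ) (hn : 5 < n) (hev : Even n) (hm : 4 ≤ m) (k : ℕ) (hk : k < m)
    (x y : Option (ZMod (n * m)))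
    (hx : x ∈ internalCycle n m k) (hy : y ∈ internalCycle n m (k + 1)) :
    MMD (jahangir n m) x y ↔ (jahangir n m).dist x y = n + 1 := by
  obtain ⟨h, hh⟩ := hev
  have hh3 : 3 ≤ h := by omega
  have hm0 : 0 < m := by omega
  have h4 : n*4 ≤ n*m := Nat.mul_le_mul_left n hm
  simp only [internalCycle, Set.mem_insert_iff, Set.mem_setOf_eq] at hx hy
  rcases hx with rfl | ⟨i, hi, rfl⟩
  · rcases hy with rfl | ⟨j, hj, rfl⟩
    · -- x = none, y = none
      constructor
      · intro hmmd
        exfalso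
        have h1 := hmmd.1 _ (JAux.adj_hub hn hm hm0)
        rw [JAux.dist_eq hn hm, JAux.dist_eq hn hm] at h1
        simp only [JAux.DD] at h1
        rw [JAux.ee_hub hn hm] at h1
        omega
      · intro hd
        rw [JAux.dist_eq hn hm] at hd
        simp only [JAux.DD] at hd
        omega
    · -- x = none, y = some
      have hkm : (k+3) % m < m := Nat.mod_lt _ hm0
      have hcongr : ((n*((k+3)%m) : ℕ) : ZMod (n*m)) = ((n*(k+3) : ℕ) : ZMod (n*m)) := by
        apply (ZMod.natCast_eq_natCast_iff _ _ _).mpr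
        exact Nat.ModEq.mul_left' n (Nat.mod_modEq (k+3) m)
      have hcyc : n ≤ JAux.cyc ((n*(k+3) : ℕ) : ZMod (n*m)) ((n*(k+1)+j : ℕ) : ZMod (n*m)) := by
        have hexp : n*(k+3) = n*(k+1) + (n + n) := by ring
        have hle : n*(k+1)+j ≤ n*(k+3) := by omega
        have hc1 : ((n*(k+3) : ℕ) : ZMod (n*m)) - ((n*(k+1)+j : ℕ) : ZMod (n*m))
            = ((n*(k+3) - (n*(k+1)+j) : ℕ) : ZMod (n*m)) := JAux.cast_sub_cast hn hm hle
        have hdiff : n*(k+3) - (n*(k+1)+j) = n + n - j := by omega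
        have hv1 : (((n*(k+3) : ℕ) : ZMod (n*m)) - ((n*(k+1)+j : ℕ) : ZMod (n*m))).val
            = n + n - j := by
          rw [hc1, hdiff, JAux.val_cast_lt hn hm (by omega)]
        have hc2 : ((n*(k+1)+j : ℕ) : ZMod (n*m)) - ((n*(k+3) : ℕ) : ZMod (n*m))
            = -(((n*(k+3) : ℕ) : ZMod (n*m)) - ((n*(k+1)+j : ℕ) : ZMod (n*m))) := by ring
        have hv2 := JAux.val_neg hn hm
          (((n*(k+3) : ℕ) : ZMod (n*m)) - ((n*(k+1)+j : ℕ) : ZMod (n*m)))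
        rw [hv1] at hv2
        rw [Nat.mod_eq_of_lt (by omega)] at hv2
        unfold JAux.cyc
        rw [hc2, hv2, hv1]
        omega
      constructor
      · intro hmmd
        exfalso
        have h1 := hmmd.1 _ (JAux.adj_hub hn hm hkm)
        rw [hcongr, JAux.dist_eq hn hm, JAux.dist_eq hn hm] at h1
        simp only [JAux.DD] at h1
        rw [JAux.ee_hub hn hm, JAux.ee_pos hn hm (k+1) j hj] at h1
        omega
      · intro hd
        rw [JAux.dist_eq hn hm] at hd
        simp only [JAux.DD] at hd
        rw [JAux.ee_pos hn hm (k+1) j hj] at hd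
        omega
  · rcases hy with rfl | ⟨j, hj, rfl⟩
    · -- x = some, y = none
      have hkm : (k+3) % m < m := Nat.mod_lt _ hm0
      have hcongr : ((n*((k+3)%m) : ℕ) : ZMod (n*m)) = ((n*(k+3) : ℕ) : ZMod (n*m)) := by
        apply (ZMod.natCast_eq_natCast_iff _ _ _).mpr
        exact Nat.ModEq.mul_left' n (Nat.mod_modEq (k+3) m)
      have hcyc : n ≤ JAux.cyc ((n*k+i : ℕ) : ZMod (n*m)) ((n*(k+3) : ℕ) : ZMod (n*m)) := by
        have hexp : n*(k+3) = n*k + (n + n + n) := by ring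
        have hle : n*k+i ≤ n*(k+3) := by omega
        have hc1 : ((n*(k+3) : ℕ) : ZMod (n*m)) - ((n*k+i : ℕ) : ZMod (n*m))
            = ((n*(k+3) - (n*k+i) : ℕ) : ZMod (n*m)) := JAux.cast_sub_cast hn hm hle
        have hdiff : n*(k+3) - (n*k+i) = n + n + n - i := by omega
        have hv1 : (((n*(k+3) : ℕ) : ZMod (n*m)) - ((n*k+i : ℕ) : ZMod (n*m))).val
            = n + n + n - i := by
          rw [hc1, hdiff, JAux.val_cast_lt hn hm (by omega)]
        have hc2 : ((n*k+i : ℕ) : ZMod (n*m)) - ((n*(k+3) : ℕ) : ZMod (n*m))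
            = -(((n*(k+3) : ℕ) : ZMod (n*m)) - ((n*k+i : ℕ) : ZMod (n*m))) := by ring
        have hv2 := JAux.val_neg hn hm
          (((n*(k+3) : ℕ) : ZMod (n*m)) - ((n*k+i : ℕ) : ZMod (n*m)))
        rw [hv1] at hv2
        rw [Nat.mod_eq_of_lt (by omega)] at hv2
        unfold JAux.cyc
        rw [hc2, hv2, hv1]
        omega
      constructor
      · intro hmmd
        exfalso
        have h1 := hmmd.2 _ (JAux.adj_hub hn hm hkm)
        rw [hcongr, JAux.dist_eq hn hm, JAux.dist_eq hn hm] at h1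
        simp only [JAux.DD] at h1
        rw [JAux.ee_hub hn hm, JAux.ee_pos hn hm k i hi] at h1
        omega
      · intro hd
        rw [JAux.dist_eq hn hm] at hd
        simp only [JAux.DD] at hd
        rw [JAux.ee_pos hn hm k i hi] at hd
        omega
    · -- x = some, y = some
      have hdxy : (jahangir n m).dist (some ((n*k+i : ℕ) : ZMod (n*m)))
          (some ((n*(k+1)+j : ℕ) : ZMod (n*m)))
          = min (n + j - i) (min i (n - i) + min j (n - j) + 2) := by
        rw [JAux.dist_eq hn hm, JAux.DD_pos_pos hn hm k i j hi hj]
      have hsucc : ((n*k+i : ℕ) : ZMod (n*m)) + 1 = ((n*k+(i+1) : ℕ) : ZMod (n*m)) := by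
        push_cast; ring
      have hbsucc : ((n*(k+1)+j : ℕ) : ZMod (n*m)) + 1
          = ((n*(k+1)+(j+1) : ℕ) : ZMod (n*m)) := by
        push_cast; ring
      constructor
      · intro hmmd
        by_contra hne
        rw [hdxy] at hne
        by_cases c1 : h + 1 ≤ i
        · have hpred : ((n*k+i : ℕ) : ZMod (n*m)) - 1 = ((n*k+(i-1) : ℕ) : ZMod (n*m)) := by
            rw [JAux.cast_pred hn hm _ (by omega)]
            congr 1
            omega
          have h1 := hmmd.1 _ (JAux.adj_pred hn hm _)
          rw [hpred, hdxy, JAux.dist_eq hn hm,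
            JAux.DD_pos_pos hn hm k (i-1) j (by omega) hj] at h1
          omega
        · by_cases c2 : j + 1 ≤ h
          · have h1 := hmmd.2 _ (JAux.adj_succ hn hm _)
            rw [hbsucc, hdxy, JAux.dist_eq hn hm,
              JAux.DD_pos_pos hn hm k i (j+1) hi (by omega)] at h1
            omega
          · rcases Nat.lt_trichotomy j (i+1) with c3 | c3 | c3
            · have hpred : ((n*k+i : ℕ) : ZMod (n*m)) - 1
                  = ((n*k+(i-1) : ℕ) : ZMod (n*m)) := by
                rw [JAux.cast_pred hn hm _ (by omega)]
                congr 1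
                omega
              have h1 := hmmd.1 _ (JAux.adj_pred hn hm _)
              rw [hpred, hdxy, JAux.dist_eq hn hm,
                JAux.DD_pos_pos hn hm k (i-1) j (by omega) hj] at h1
              omega
            · exact hne (by omega)
            · by_cases c4 : i + 1 ≤ h
              · have h1 := hmmd.1 _ (JAux.adj_succ hn hm _)
                rw [hsucc, hdxy, JAux.dist_eq hn hm,
                  JAux.DD_pos_pos hn hm k (i+1) j (by omega) hj] at h1
                omega
              · have hbpred : ((n*(k+1)+j : ℕ) : ZMod (n*m)) - 1
                    = ((n*(k+1)+(j-1) : ℕ) : ZMod (n*m)) := by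
                  rw [JAux.cast_pred hn hm _ (by omega)]
                  congr 1
                  omega
                have h1 := hmmd.2 _ (JAux.adj_pred hn hm _)
                rw [hbpred, hdxy, JAux.dist_eq hn hm,
                  JAux.DD_pos_pos hn hm k i (j-1) hi (by omega)] at h1
                omega
      · intro hd
        rw [hdxy] at hd
        constructor
        · intro w hw
          rw [JAux.adj_some_iff hn hm] at hw
          rcases hw with rfl | rfl | ⟨-, hhub⟩
          · rw [hsucc, hdxy, JAux.dist_eq hn hm,
              JAux.DD_pos_pos hn hm k (i+1) j (by omega) hj]
            omega
          · have hpred : ((n*k+i : ℕ) : ZMod (n*m)) - 1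
                = ((n*k+(i-1) : ℕ) : ZMod (n*m)) := by
              rw [JAux.cast_pred hn hm _ (by omega)]
              congr 1
              omega
            rw [hpred, hdxy, JAux.dist_eq hn hm,
              JAux.DD_pos_pos hn hm k (i-1) j (by omega) hj]
            omega
          · exact absurd hhub (JAux.not_hub hn hm k i (by omega) (by omega))
        · intro w hw
          rw [JAux.adj_some_iff hn hm] at hw
          rcases hw with rfl | rfl | ⟨-, hhub⟩
          · rw [hbsucc, hdxy, JAux.dist_eq hn hm,
              JAux.DD_pos_pos hn hm k i (j+1) hi (by omega)]
            omega
          · have hbpred : ((n*(k+1)+j : ℕ) : ZMod (n*m)) - 1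
                = ((n*(k+1)+(j-1) : ℕ) : ZMod (n*m)) := by
              rw [JAux.cast_pred hn hm _ (by omega)]
              congr 1
              omega
            rw [hbpred, hdxy, JAux.dist_eq hn hm,
              JAux.DD_pos_pos hn hm k i (j-1) hi (by omega)]
            omega
          · exact absurd hhub (JAux.not_hub hn hm (k+1) j (by omega) (by omega))
end

section
/- Let n ≥ 5 be odd and m ≥ 4. In J(n,m), two vertices x and y lying on internal cycles that share no edge are mutually maximally distant if and only if d(x,y) = n+1. -/
namespace Jah

open SimpleGraph

/-- distance from cycle vertex to hub -/
def ds (n m : ℕ) (a : ZMod (n*m)) : ℕ := 1 + min (a.val % n) (n - a.val % n)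

/-- cyclic distance between cycle vertices -/
def cyc (n m : ℕ) (a b : ZMod (n*m)) : ℕ := min ((b-a).val) (n*m - (b-a).val)

/-- the exact distance function on `jahangir n m` -/
def D (n m : ℕ) : Option (ZMod (n*m)) → Option (ZMod (n*m)) → ℕ
  | none, none => 0
  | none, some b => ds n m b
  | some a, none => ds n m a
  | some a, some b => min (cyc n m a b) (ds n m a + ds n m b)

variable {n m : ℕ}

lemma N_pos (hn : 5 ≤ n) (hm : 4 ≤ m) : 0 < n*m := by positivity

lemma four_n_le (hn : 5 ≤ n) (hm : 4 ≤ m) : 4*n ≤ n*m := by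
  calc 4*n = n*4 := by ring
  _ ≤ n*m := Nat.mul_le_mul_left n hm

lemma neZero (hn : 5 ≤ n) (hm : 4 ≤ m) : NeZero (n*m) := ⟨(N_pos hn hm).ne'⟩

lemma val_sub [NeZero (n*m)] (a b : ZMod (n*m)) :
    (b - a).val = (b.val + (n*m - a.val)) % (n*m) := by
  have h1 : (((n*m) - a.val : ℕ) : ZMod (n*m)) = - a := by
    rw [Nat.cast_sub a.val_le]
    simp [ZMod.natCast_self, ZMod.natCast_zmod_val]
  have h2 : b - a = (((b.val + (n*m - a.val) : ℕ)) : ZMod (n*m)) := by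
    push_cast
    rw [h1, ZMod.natCast_zmod_val]
    ring
  rw [h2, ZMod.val_natCast]

lemma val_add_one [NeZero (n*m)] (a : ZMod (n*m)) :
    (a + 1).val = (a.val + 1) % (n*m) := by
  have : a + 1 = (((a.val + 1 : ℕ)) : ZMod (n*m)) := by
    push_cast [ZMod.natCast_zmod_val]
    rfl
  rw [this, ZMod.val_natCast]

lemma mod_n_cast [NeZero (n*m)] (x : ℕ) : ((x : ZMod (n*m))).val % n = x % n := by
  rw [ZMod.val_natCast, Nat.mod_mod_of_dvd _ (dvd_mul_right n m)]

/-- spokes at multiples of `n` wrap -/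
lemma val_kcast (j : ℕ) : ((n*(j % m) : ℕ) : ZMod (n*m)) = ((n*j : ℕ) : ZMod (n*m)) := by
  have h : n * j = n * (j % m) + (n*m) * (j / m) := by
    conv_lhs => rw [← Nat.mod_add_div j m]
    ring
  have h0 : ((n : ZMod (n*m)) * (m : ZMod (n*m))) = 0 := by
    rw [← Nat.cast_mul]; exact ZMod.natCast_self _
  rw [h]
  push_cast [h0]
  ring

lemma one_ne_zero' (hn : 5 ≤ n) (hm : 4 ≤ m) : (1 : ZMod (n*m)) ≠ 0 := by
  intro h
  have h1 : ((1:ℕ) : ZMod (n*m)) = 0 := by exact_mod_cast h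
  rw [ZMod.natCast_eq_zero_iff] at h1
  have := Nat.le_of_dvd one_pos h1
  nlinarith

lemma adj_up (hn : 5 ≤ n) (hm : 4 ≤ m) (a : ZMod (n*m)) :
    (jahangir n m).Adj (some a) (some (a+1)) := by
  refine Or.inr (Or.inr ⟨a, a+1, rfl, rfl, ?_, Or.inl rfl⟩)
  intro h
  exact one_ne_zero' hn hm (by linear_combination h.symm)

lemma adj_spoke (k : ℕ) (hk : k < m) :
    (jahangir n m).Adj none (some ((n*k : ℕ) : ZMod (n*m))) :=
  Or.inl ⟨rfl, _, rfl, k, hk, rfl⟩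

lemma reach_up (hn : 5 ≤ n) (hm : 4 ≤ m) (a : ZMod (n*m)) (t : ℕ) :
    (jahangir n m).Reachable (some a) (some (a + (t : ZMod (n*m)))) := by
  induction t with
  | zero => simpa using SimpleGraph.Reachable.refl (some a)
  | succ t ih =>
      have h : a + ((t+1 : ℕ) : ZMod (n*m)) = (a + (t : ZMod (n*m))) + 1 := by
        push_cast; ring
      rw [h]
      exact ih.trans (adj_up hn hm _).reachable

lemma connected (hn : 5 ≤ n) (hm : 4 ≤ m) : (jahangir n m).Connected := by
  haveI : NeZero (n*m) := neZero hn hm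
  have key : ∀ v, (jahangir n m).Reachable none v := by
    intro v
    match v with
    | none => exact Reachable.refl _
    | some a =>
        have h0 : (jahangir n m).Adj none (some ((n*0 : ℕ) : ZMod (n*m))) :=
          adj_spoke 0 (by omega)
        have h1 : ((n*0 : ℕ) : ZMod (n*m)) = (0 : ZMod (n*m)) := by norm_num
        rw [h1] at h0
        have h2 := reach_up hn hm (0 : ZMod (n*m)) a.val
        rw [zero_add, ZMod.natCast_zmod_val] at h2
        exact h0.reachable.trans h2
  exact ⟨fun u v => (key u).symm.trans (key v)⟩

lemma dist_adj_le {u v : Option (ZMod (n*m))} (h : (jahangir n m).Adj u v) :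
    (jahangir n m).dist u v ≤ 1 :=
  le_of_eq (SimpleGraph.dist_eq_one_iff_adj.mpr h)

lemma dist_le_up (hn : 5 ≤ n) (hm : 4 ≤ m) (a : ZMod (n*m)) (t : ℕ) :
    (jahangir n m).dist (some a) (some (a + (t : ZMod (n*m)))) ≤ t := by
  induction t with
  | zero => simp
  | succ t ih =>
      have h : a + ((t+1 : ℕ) : ZMod (n*m)) = (a + (t : ZMod (n*m))) + 1 := by
        push_cast; ring
      rw [h]
      calc (jahangir n m).dist (some a) (some ((a + (t : ZMod (n*m))) + 1))
          ≤ (jahangir n m).dist (some a) (some (a + (t : ZMod (n*m))))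
            + (jahangir n m).dist (some (a + (t : ZMod (n*m)))) (some ((a + (t : ZMod (n*m))) + 1)) :=
            (connected hn hm).dist_triangle
        _ ≤ t + 1 := add_le_add ih (dist_adj_le (adj_up hn hm _))

lemma dist_le_cyc (hn : 5 ≤ n) (hm : 4 ≤ m) (a b : ZMod (n*m)) :
    (jahangir n m).dist (some a) (some b) ≤ cyc n m a b := by
  haveI : NeZero (n*m) := neZero hn hm
  refine le_min ?_ ?_
  · have h := dist_le_up hn hm a (b-a).val
    rwa [ZMod.natCast_zmod_val, add_sub_cancel] at h
  · have h := dist_le_up hn hm b (n*m - (b-a).val)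
    have h2 : b + ((n*m - (b-a).val : ℕ) : ZMod (n*m)) = a := by
      have h0 : ((n : ZMod (n*m)) * (m : ZMod (n*m))) = 0 := by
        rw [← Nat.cast_mul]; exact ZMod.natCast_self _
      rw [Nat.cast_sub (b-a).val_le, ZMod.natCast_zmod_val]
      push_cast [h0]
      ring
    rw [h2] at h
    rwa [SimpleGraph.dist_comm] at h

lemma dist_le_hub (hn : 5 ≤ n) (hm : 4 ≤ m) (a : ZMod (n*m)) :
    (jahangir n m).dist (some a) none ≤ ds n m a := by
  haveI : NeZero (n*m) := neZero hn hm
  set q := a.val / n with hq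
  set r := a.val % n with hr
  have hqr : n*q + r = a.val := Nat.div_add_mod a.val n
  have hrn : r < n := Nat.mod_lt _ (by omega)
  have hqm : q < m := by
    by_contra hc
    push_neg at hc
    have : n*m ≤ n*q := Nat.mul_le_mul_left n hc
    have := a.val_lt
    omega
  rcases le_or_gt r (n - r) with hcase | hcase
  · -- walk down to spoke n*q
    have hadj : (jahangir n m).Adj none (some ((n*q : ℕ) : ZMod (n*m))) := adj_spoke q hqm
    have hup := dist_le_up hn hm ((n*q : ℕ) : ZMod (n*m)) r
    have he : ((n*q : ℕ) : ZMod (n*m)) + (r : ZMod (n*m)) = a := by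
      rw [← Nat.cast_add, hqr, ZMod.natCast_zmod_val]
    rw [he] at hup
    calc (jahangir n m).dist (some a) none
        ≤ (jahangir n m).dist (some a) (some ((n*q : ℕ) : ZMod (n*m)))
          + (jahangir n m).dist (some ((n*q : ℕ) : ZMod (n*m))) none :=
          (connected hn hm).dist_triangle
      _ ≤ r + 1 := by
          refine add_le_add ?_ ?_
          · rw [SimpleGraph.dist_comm]; exact hup
          · rw [SimpleGraph.dist_comm]; exact dist_adj_le hadj
      _ ≤ ds n m a := by simp only [ds, ← hr]; omega
  · -- walk up to spoke n*(q+1)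
    have hadj : (jahangir n m).Adj none (some ((n*((q+1) % m) : ℕ) : ZMod (n*m))) :=
      adj_spoke _ (Nat.mod_lt _ (by omega))
    rw [val_kcast (q+1)] at hadj
    have hup := dist_le_up hn hm a (n - r)
    have he : a + ((n - r : ℕ) : ZMod (n*m)) = ((n*(q+1) : ℕ) : ZMod (n*m)) := by
      have hring : n*(q+1) = n*q + n := by ring
      rw [← ZMod.natCast_zmod_val a, ← Nat.cast_add]
      congr 1
      omega
    rw [he] at hup
    calc (jahangir n m).dist (some a) none
        ≤ (jahangir n m).dist (some a) (some ((n*(q+1) : ℕ) : ZMod (n*m)))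
          + (jahangir n m).dist (some ((n*(q+1) : ℕ) : ZMod (n*m))) none :=
          (connected hn hm).dist_triangle
      _ ≤ (n - r) + 1 := by
          refine add_le_add hup ?_
          rw [SimpleGraph.dist_comm]; exact dist_adj_le hadj
      _ ≤ ds n m a := by simp only [ds, ← hr]; omega

lemma dist_le_D (hn : 5 ≤ n) (hm : 4 ≤ m) (x y : Option (ZMod (n*m))) :
    (jahangir n m).dist x y ≤ D n m x y := by
  match x, y with
  | none, none => simp [D]
  | none, some b =>
      rw [SimpleGraph.dist_comm]
      exact dist_le_hub hn hm b
  | some a, none => exact dist_le_hub hn hm a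
  | some a, some b =>
      refine le_min (dist_le_cyc hn hm a b) ?_
      calc (jahangir n m).dist (some a) (some b)
          ≤ (jahangir n m).dist (some a) none + (jahangir n m).dist none (some b) :=
            (connected hn hm).dist_triangle
        _ ≤ ds n m a + ds n m b := by
            refine add_le_add (dist_le_hub hn hm a) ?_
            rw [SimpleGraph.dist_comm]; exact dist_le_hub hn hm b

lemma min_lip {N r : ℕ} (hN : 2 ≤ N) (hr : r < N) :
    min ((r+1) % N) (N - (r+1) % N) ≤ min r (N - r) + 1 ∧
    min r (N - r) ≤ min ((r+1) % N) (N - (r+1) % N) + 1 := by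
  rcases Nat.lt_or_ge (r+1) N with h | h
  · rw [Nat.mod_eq_of_lt h]; omega
  · have h1 : r + 1 = N := by omega
    rw [h1, Nat.mod_self]; omega

lemma sub_succ_val (hn : 5 ≤ n) (hm : 4 ≤ m) (a z : ZMod (n*m)) :
    (z - a).val = ((z - (a+1)).val + 1) % (n*m) := by
  haveI := neZero hn hm
  have h : z - a = (z - (a+1)) + 1 := by ring
  rw [h, val_add_one]

lemma cyc_lip (hn : 5 ≤ n) (hm : 4 ≤ m) (a z : ZMod (n*m)) :
    cyc n m a z ≤ cyc n m (a+1) z + 1 ∧ cyc n m (a+1) z ≤ cyc n m a z + 1 := by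
  haveI := neZero hn hm
  have h := sub_succ_val hn hm a z
  have h2 : 2 ≤ n*m := by nlinarith
  have hlt : (z - (a+1)).val < n*m := ZMod.val_lt _
  unfold cyc
  rw [h]
  exact ⟨(min_lip h2 hlt).1, (min_lip h2 hlt).2⟩

lemma succ_val_mod_n (hn : 5 ≤ n) (hm : 4 ≤ m) (a : ZMod (n*m)) :
    (a+1).val % n = (a.val % n + 1) % n := by
  haveI := neZero hn hm
  rw [val_add_one, Nat.mod_mod_of_dvd _ (dvd_mul_right n m), Nat.add_mod,
    Nat.mod_eq_of_lt (show (1:ℕ) < n by omega)]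

lemma ds_lip (hn : 5 ≤ n) (hm : 4 ≤ m) (a : ZMod (n*m)) :
    ds n m a ≤ ds n m (a+1) + 1 ∧ ds n m (a+1) ≤ ds n m a + 1 := by
  haveI := neZero hn hm
  have hr : a.val % n < n := Nat.mod_lt _ (by omega)
  have h := min_lip (N := n) (r := a.val % n) (by omega) hr
  unfold ds
  rw [succ_val_mod_n hn hm a]
  omega

lemma val_spoke_mod (hn : 5 ≤ n) (hm : 4 ≤ m) (j : ℕ) :
    (((n*j : ℕ) : ZMod (n*m))).val % n = 0 := by
  haveI := neZero hn hm
  rw [mod_n_cast, Nat.mul_mod_right]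

lemma ds_spoke (hn : 5 ≤ n) (hm : 4 ≤ m) (j : ℕ) :
    ds n m ((n*j : ℕ) : ZMod (n*m)) = 1 := by
  unfold ds
  rw [val_spoke_mod hn hm]
  simp

lemma sub_val_mod_n (hn : 5 ≤ n) (hm : 4 ≤ m) (a b : ZMod (n*m)) (ha : a.val % n = 0) :
    (b - a).val % n = b.val % n := by
  haveI := neZero hn hm
  rw [val_sub, Nat.mod_mod_of_dvd _ (dvd_mul_right n m)]
  obtain ⟨c, hc⟩ : n ∣ (n*m - a.val) :=
    Nat.dvd_sub (dvd_mul_right n m) (Nat.dvd_of_mod_eq_zero ha)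
  rw [hc, Nat.add_mul_mod_self_left]

lemma ds_le_cyc (hn : 5 ≤ n) (hm : 4 ≤ m) (a b : ZMod (n*m)) (ha : a.val % n = 0) :
    ds n m b ≤ cyc n m a b + 1 := by
  haveI := neZero hn hm
  have hvm : (b - a).val % n = b.val % n := sub_val_mod_n hn hm a b ha
  have hvlt : (b - a).val < n*m := ZMod.val_lt _
  have hmod : (b - a).val % n ≤ (b - a).val := Nat.mod_le _ _
  have hb : b.val % n < n := Nat.mod_lt _ (by omega)
  unfold cyc ds
  rcases Nat.eq_zero_or_pos (b.val % n) with h0 | h0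
  · omega
  · have hsum : ((n*m - (b-a).val) % n + (b-a).val % n) % n = 0 := by
      rw [← Nat.add_mod, Nat.sub_add_cancel hvlt.le, Nat.mul_mod_right]
    obtain ⟨c, hc⟩ := Nat.dvd_of_mod_eq_zero hsum
    have hw : (n*m - (b-a).val) % n < n := Nat.mod_lt _ (by omega)
    have hcc : c < 2 := by
      by_contra hcc
      push_neg at hcc
      have := Nat.mul_le_mul_left n hcc
      omega
    have hle : (n*m - (b-a).val) % n ≤ n*m - (b-a).val := Nat.mod_le _ _
    interval_cases c
    · simp only [Nat.mul_zero] at hc; omega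
    · rw [Nat.mul_one] at hc; omega

lemma lip_up (hn : 5 ≤ n) (hm : 4 ≤ m) (a : ZMod (n*m)) (z : Option (ZMod (n*m))) :
    D n m (some a) z ≤ D n m (some (a+1)) z + 1 ∧
    D n m (some (a+1)) z ≤ D n m (some a) z + 1 := by
  match z with
  | none => exact ds_lip hn hm a
  | some c =>
      have h1 := cyc_lip hn hm a c
      have h2 := ds_lip hn hm a
      simp only [D]
      omega

lemma lip (hn : 5 ≤ n) (hm : 4 ≤ m) {x y : Option (ZMod (n*m))}
    (hxy : (jahangir n m).Adj x y) (z : Option (ZMod (n*m))) :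
    D n m x z ≤ D n m y z + 1 := by
  rcases hxy with ⟨hx, a, hy, k, hk, hak⟩ | ⟨hy, a, hx, k, hk, hak⟩ | ⟨a, b, hx, hy, hab, h⟩
  · subst hx; subst hy; subst hak
    match z with
    | none => simp [D]
    | some b =>
        have := ds_le_cyc hn hm _ b (val_spoke_mod hn hm k)
        simp only [D]
        omega
  · subst hy; subst hx; subst hak
    match z with
    | none =>
        simp only [D]
        rw [ds_spoke hn hm]
    | some b =>
        have := ds_spoke hn hm k
        simp only [D]
        omega
  · subst hx; subst hy
    rcases h with h | h
    · subst h; exact (lip_up hn hm a z).1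
    · subst h; exact (lip_up hn hm b z).2

lemma D_self (hn : 5 ≤ n) (hm : 4 ≤ m) (x : Option (ZMod (n*m))) : D n m x x = 0 := by
  haveI := neZero hn hm
  match x with
  | none => rfl
  | some a => simp [D, cyc, sub_self]

lemma walk_ge (hn : 5 ≤ n) (hm : 4 ≤ m) {x z : Option (ZMod (n*m))}
    (p : (jahangir n m).Walk x z) : D n m x z ≤ p.length := by
  induction p with
  | nil => rw [D_self hn hm]; exact Nat.zero_le _
  | @cons u v w h p ih =>
      rw [SimpleGraph.Walk.length_cons]
      exact le_trans (lip hn hm h w) (by omega)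

lemma dist_eq_D (hn : 5 ≤ n) (hm : 4 ≤ m) (x z : Option (ZMod (n*m))) :
    (jahangir n m).dist x z = D n m x z := by
  refine le_antisymm (dist_le_D hn hm x z) ?_
  obtain ⟨p, hp⟩ := (connected hn hm).exists_walk_length_eq_dist x z
  rw [← hp]
  exact walk_ge hn hm p

lemma two_ds_le (hn : 5 ≤ n) (hm : 4 ≤ m) (hodd : Odd n) (a : ZMod (n*m)) :
    2 * ds n m a ≤ n + 1 := by
  obtain ⟨t, ht⟩ := hodd
  have : a.val % n < n := Nat.mod_lt _ (by omega)
  unfold ds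
  omega

lemma val_neg' (hn : 5 ≤ n) (hm : 4 ≤ m) (x : ZMod (n*m)) (hx : x.val ≠ 0) :
    (-x).val = n*m - x.val := by
  haveI := neZero hn hm
  have h := val_sub (n := n) (m := m) x 0
  rw [zero_sub] at h
  have hlt : n*m - x.val < n*m := by
    have h1 := ZMod.val_lt x
    have h2 : 0 < n*m := N_pos hn hm
    omega
  rw [h, ZMod.val_zero, Nat.zero_add, Nat.mod_eq_of_lt hlt]

lemma cyc_comm (hn : 5 ≤ n) (hm : 4 ≤ m) (a b : ZMod (n*m)) : cyc n m a b = cyc n m b a := by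
  haveI := neZero hn hm
  unfold cyc
  rcases eq_or_ne ((b - a).val) 0 with h | h
  · have h2 : b - a = 0 := by
      rwa [ZMod.val_eq_zero] at h
    have h3 : a - b = 0 := by rw [← neg_sub b a, h2, neg_zero]
    rw [h2, h3]
  · have h2 : (a - b).val = n*m - (b - a).val := by
      rw [show a - b = -(b - a) by ring]
      exact val_neg' hn hm _ h
    rw [h2]
    have := ZMod.val_lt (b - a)
    omega

lemma pred_val_mod_n (hn : 5 ≤ n) (hm : 4 ≤ m) (a : ZMod (n*m)) (ha : a.val % n ≠ 0) :
    (a - 1).val % n = a.val % n - 1 := by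
  haveI := neZero hn hm
  have h1 : (1 : ZMod (n*m)).val = 1 := by
    rw [← Nat.cast_one, ZMod.val_natCast, Nat.mod_eq_of_lt (by nlinarith)]
  have haval : 1 ≤ a.val := by
    rcases Nat.eq_zero_or_pos a.val with h | h
    · rw [h] at ha; simp at ha
    · omega
  rw [val_sub, h1, Nat.mod_mod_of_dvd _ (dvd_mul_right n m)]
  have hnm1 : 1 ≤ n*m := by nlinarith
  have h2 : a.val + (n*m - 1) = (a.val - 1) + n*m := by omega
  rw [h2, Nat.add_mul_mod_self_left]
  have hq := Nat.div_add_mod a.val n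
  have hrn : a.val % n < n := Nat.mod_lt _ (by omega)
  have h3 : a.val - 1 = n*(a.val/n) + (a.val % n - 1) := by omega
  rw [h3, Nat.mul_add_mod, Nat.mod_eq_of_lt (by omega)]

lemma far_spoke (hn : 5 ≤ n) (hm : 4 ≤ m) (b : ZMod (n*m)) :
    ∃ c₀ : ZMod (n*m), (jahangir n m).Adj none (some c₀) ∧ ds n m c₀ = 1 ∧
      n + 1 ≤ cyc n m c₀ b ∧ n + 1 ≤ cyc n m b c₀ := by
  haveI := neZero hn hm
  have h4n := four_n_le hn hm
  set q := b.val / n with hq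
  set r := b.val % n with hr
  have hqr : n*q + r = b.val := Nat.div_add_mod b.val n
  have hrn : r < n := Nat.mod_lt _ (by omega)
  have hring : n*(q+2) = n*q + 2*n := by ring
  have hble : b.val ≤ n*(q+2) := by omega
  have hblt : b.val < n*m := ZMod.val_lt b
  have hc₀ : ((n*((q+2) % m) : ℕ) : ZMod (n*m)) = ((n*(q+2) : ℕ) : ZMod (n*m)) := val_kcast _
  have h5 : n*(q+2) - b.val = 2*n - r := by omega
  have hqlt : n*(q+2) - b.val < n*m := by omega
  have hdiff : (((n*(q+2) : ℕ) : ZMod (n*m)) - b).val = 2*n - r := by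
    rw [← ZMod.natCast_zmod_val b, ← Nat.cast_sub hble, ZMod.val_natCast,
      Nat.mod_eq_of_lt hqlt, h5]
  have hne : (((n*(q+2) : ℕ) : ZMod (n*m)) - b).val ≠ 0 := by rw [hdiff]; omega
  have hdiff2 : (b - ((n*(q+2) : ℕ) : ZMod (n*m))).val = n*m - (2*n - r) := by
    rw [show b - ((n*(q+2) : ℕ) : ZMod (n*m)) = -(((n*(q+2) : ℕ) : ZMod (n*m)) - b) by ring,
      val_neg' hn hm _ hne, hdiff]
  refine ⟨((n*((q+2) % m) : ℕ) : ZMod (n*m)), adj_spoke ((q+2) % m) (Nat.mod_lt _ (by omega)),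
    ds_spoke hn hm _, ?_, ?_⟩
  · unfold cyc
    rw [hc₀, hdiff2]
    omega
  · unfold cyc
    rw [hc₀, hdiff]
    omega

lemma step_away (hn : 5 ≤ n) (hm : 4 ≤ m) (a : ZMod (n*m))
    (hsmall : 2 * ds n m a ≤ n - 1) :
    ∃ a' : ZMod (n*m), (jahangir n m).Adj (some a) (some a') ∧
      ds n m a' = ds n m a + 1 ∧ (a' = a + 1 ∨ a = a' + 1) := by
  haveI := neZero hn hm
  have hrn : a.val % n < n := Nat.mod_lt _ (by omega)
  rcases Nat.lt_or_ge (2*(a.val % n) + 3) (n + 1) with hcase | hcase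
  · refine ⟨a + 1, adj_up hn hm a, ?_, Or.inl rfl⟩
    have h1 : (a+1).val % n = a.val % n + 1 := by
      rw [succ_val_mod_n hn hm, Nat.mod_eq_of_lt (by omega)]
    unfold ds
    rw [h1]
    omega
  · have hkey : n + 3 ≤ 2*(a.val % n) := by unfold ds at hsmall; omega
    have hane : a.val % n ≠ 0 := by omega
    have h1 : (a - 1).val % n = a.val % n - 1 := pred_val_mod_n hn hm a hane
    refine ⟨a - 1, ?_, ?_, Or.inr (by ring)⟩
    · have h2 := adj_up hn hm (a - 1)
      rw [sub_add_cancel] at h2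
      exact h2.symm
    · unfold ds
      rw [h1]
      omega

lemma key_sub (hn : 5 ≤ n) (hm : 4 ≤ m) {k k' i i' g : ℕ}
    (hi : i ≤ n) (hi' : i' ≤ n) (hg2 : 2 ≤ g) (hgm : g ≤ m - 2)
    (hgdef : (k < k' ∧ g = k' - k) ∨ (k' < k ∧ g = m - (k - k'))) :
    ((((n*k' + i' : ℕ) : ZMod (n*m))) - (((n*k + i : ℕ) : ZMod (n*m)))).val
      = n*(g-1) + (n - i) + i' := by
  haveI := neZero hn hm
  have hwlt : n*(g-1) + (n - i) + i' < n*m := by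
    have hA : n*(g-1) ≤ n*(m-3) := Nat.mul_le_mul_left n (by omega)
    have hB : n*(m-3) + 2*n = n*(m-1) := by
      rw [show n*(m-3) + 2*n = n*((m-3)+2) by ring, show (m-3)+2 = m-1 by omega]
    have hC : n*(m-1) + n = n*m := by
      rw [show n*(m-1) + n = n*((m-1)+1) by ring, show (m-1)+1 = m by omega]
    omega
  have hsub : (((n*k + i : ℕ) : ZMod (n*m))) + ((n*(g-1) + (n - i) + i' : ℕ) : ZMod (n*m))
      = (((n*k' + i' : ℕ) : ZMod (n*m))) := by
    rcases hgdef with ⟨hlt, hgeq⟩ | ⟨hlt, hgeq⟩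
    · have e : (n*k + i) + (n*(g-1) + (n - i) + i') = n*k' + i' := by
        subst hgeq
        have h1 : n*(k'-k-1) + n = n*(k'-k) := by
          rw [show n*(k'-k-1) + n = n*((k'-k-1)+1) by ring, show (k'-k-1)+1 = k'-k by omega]
        have h2 : n*k + n*(k'-k) = n*k' := by
          rw [← Nat.mul_add]; congr 1; omega
        omega
      rw [← Nat.cast_add, e]
    · have e : (n*k + i) + (n*(g-1) + (n - i) + i') = (n*k' + i') + n*m := by
        subst hgeq
        have h1 : n*(m-(k-k')-1) + n = n*(m-(k-k')) := by
          rw [show n*(m-(k-k')-1) + n = n*((m-(k-k')-1)+1) by ring,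
            show (m-(k-k')-1)+1 = m-(k-k') by omega]
        have h2 : n*k + n*(m-(k-k')) = n*(m+k') := by
          rw [← Nat.mul_add]; congr 1; omega
        have h3 : n*(m+k') = n*m + n*k' := by ring
        omega
      rw [← Nat.cast_add, e, Nat.cast_add, ZMod.natCast_self, add_zero]
  rw [show (((n*k' + i' : ℕ) : ZMod (n*m))) - (((n*k + i : ℕ) : ZMod (n*m)))
      = ((n*(g-1) + (n - i) + i' : ℕ) : ZMod (n*m)) by rw [← hsub]; ring,
    ZMod.val_natCast, Nat.mod_eq_of_lt hwlt]

lemma ds_bound (hn : 5 ≤ n) (hm : 4 ≤ m) {kk i : ℕ} (hi : i ≤ n) :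
    ds n m ((n*kk + i : ℕ) : ZMod (n*m)) ≤ 1 + i ∧
    ds n m ((n*kk + i : ℕ) : ZMod (n*m)) ≤ 1 + (n - i) := by
  haveI := neZero hn hm
  have h1 : (((n*kk + i : ℕ) : ZMod (n*m))).val % n = i % n := by
    rw [mod_n_cast, Nat.mul_add_mod]
  unfold ds
  rw [h1]
  rcases eq_or_lt_of_le hi with he | hlt
  · rw [he, Nat.mod_self]
    omega
  · rw [Nat.mod_eq_of_lt hlt]
    omega

end Jah

open SimpleGraph

theorem stmt_16 (n m : ℕ) (hn : 5 ≤ n) (hodd : Odd n) (hm : 4 ≤ m)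
    (k k' : ℕ) (hk : k < m) (hk' : k' < m) (hkk : k ≠ k')
    (hshare : ((k : ℤ) - (k' : ℤ)).natAbs ≠ 1 ∧ ((k : ℤ) - (k' : ℤ)).natAbs ≠ m - 1)
    (x y : Option (ZMod (n * m)))
    (hx : x ∈ internalCycle n m k) (hy : y ∈ internalCycle n m k') :
    MMD (jahangir n m) x y ↔ (jahangir n m).dist x y = n + 1 := by
  haveI : NeZero (n*m) := Jah.neZero hn hm
  have h4n : 4*n ≤ n*m := Jah.four_n_le hn hm
  constructor
  · intro hmmd
    obtain ⟨hc1, hc2⟩ := hmmd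
    rcases x with _ | a
    · exfalso
      rcases y with _ | b
      · have hadj : (jahangir n m).Adj none (some ((n*0 : ℕ) : ZMod (n*m))) :=
          Jah.adj_spoke 0 (by omega)
        have h := hc1 _ hadj
        rw [Jah.dist_eq_D hn hm, Jah.dist_eq_D hn hm] at h
        simp only [Jah.D] at h
        rw [Jah.ds_spoke hn hm] at h
        omega
      · obtain ⟨c₀, hadj, hds1, hcyc1, hcyc2⟩ := Jah.far_spoke hn hm b
        have h := hc1 _ hadj
        rw [Jah.dist_eq_D hn hm, Jah.dist_eq_D hn hm] at h
        simp only [Jah.D] at h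
        rw [hds1] at h
        have hdb := Jah.two_ds_le hn hm hodd b
        omega
    rcases y with _ | b
    · exfalso
      obtain ⟨c₀, hadj, hds1, hcyc1, hcyc2⟩ := Jah.far_spoke hn hm a
      have h := hc2 _ hadj
      rw [Jah.dist_eq_D hn hm, Jah.dist_eq_D hn hm] at h
      simp only [Jah.D] at h
      rw [hds1] at h
      have hda := Jah.two_ds_le hn hm hodd a
      omega
    · -- x = some a, y = some b
      have hxa : ∃ i ≤ n, a = ((n*k + i : ℕ) : ZMod (n*m)) := by
        rcases Set.mem_insert_iff.mp hx with h | h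
        · exact (Option.some_ne_none a h).elim
        · obtain ⟨i, hi, hxi⟩ := h
          exact ⟨i, hi, Option.some.inj hxi⟩
      have hyb : ∃ i' ≤ n, b = ((n*k' + i' : ℕ) : ZMod (n*m)) := by
        rcases Set.mem_insert_iff.mp hy with h | h
        · exact (Option.some_ne_none b h).elim
        · obtain ⟨i, hi, hxi⟩ := h
          exact ⟨i, hi, Option.some.inj hxi⟩
      obtain ⟨i, hi, ha⟩ := hxa
      obtain ⟨i', hi', hb⟩ := hyb
      have hgfacts : ∃ g, 2 ≤ g ∧ g ≤ m - 2 ∧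
          ((k < k' ∧ g = k' - k) ∨ (k' < k ∧ g = m - (k - k'))) := by
        obtain ⟨h1, h2⟩ := hshare
        rcases Nat.lt_or_ge k k' with hlt | hge
        · exact ⟨k' - k, by omega, by omega, Or.inl ⟨hlt, rfl⟩⟩
        · have hlt : k' < k := by omega
          exact ⟨m - (k - k'), by omega, by omega, Or.inr ⟨hlt, rfl⟩⟩
      obtain ⟨g, hg2, hgm, hgdef⟩ := hgfacts
      have hv : (b - a).val = n*(g-1) + (n - i) + i' := by
        rw [ha, hb]
        exact Jah.key_sub hn hm hi hi' hg2 hgm hgdef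
      have hdsa1 : Jah.ds n m a ≤ 1 + i := by rw [ha]; exact (Jah.ds_bound hn hm hi).1
      have hdsa2 : Jah.ds n m a ≤ 1 + (n - i) := by rw [ha]; exact (Jah.ds_bound hn hm hi).2
      have hdsb1 : Jah.ds n m b ≤ 1 + i' := by rw [hb]; exact (Jah.ds_bound hn hm hi').1
      have hdsb2 : Jah.ds n m b ≤ 1 + (n - i') := by rw [hb]; exact (Jah.ds_bound hn hm hi').2
      have hA : n ≤ n*(g-1) := by
        calc n = n*1 := (mul_one n).symm
        _ ≤ n*(g-1) := Nat.mul_le_mul_left n (by omega)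
      have hB : n ≤ n*(m-g-1) := by
        calc n = n*1 := (mul_one n).symm
        _ ≤ n*(m-g-1) := Nat.mul_le_mul_left n (by omega)
      have hsumId : n*(g-1) + n*(m-g-1) + 2*n = n*m := by
        rw [show n*(g-1) + n*(m-g-1) + 2*n = n*((g-1) + (m-g-1) + 2) by ring,
          show (g-1) + (m-g-1) + 2 = m by omega]
      have hfar : Jah.ds n m a + Jah.ds n m b + 2 ≤ Jah.cyc n m a b := by
        unfold Jah.cyc
        rw [hv]
        omega
      have hdist2 : (jahangir n m).dist (some a) (some b) = Jah.ds n m a + Jah.ds n m b := by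
        rw [Jah.dist_eq_D hn hm]
        simp only [Jah.D]
        exact min_eq_right (by omega)
      rw [hdist2]
      by_contra hne
      have h2a := Jah.two_ds_le hn hm hodd a
      have h2b := Jah.two_ds_le hn hm hodd b
      obtain ⟨t, ht⟩ := hodd
      have hsplit : 2 * Jah.ds n m a ≤ n - 1 ∨ 2 * Jah.ds n m b ≤ n - 1 := by omega
      rcases hsplit with hsm | hsm
      · obtain ⟨a', hadj, hds', hpm⟩ := Jah.step_away hn hm _ hsm
        have h := hc1 _ hadj
        rw [hdist2, Jah.dist_eq_D hn hm] at h
        simp only [Jah.D] at h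
        have hcl : Jah.cyc n m a b ≤ Jah.cyc n m a' b + 1 := by
          rcases hpm with h1 | h1
          · rw [h1]
            exact (Jah.cyc_lip hn hm a b).1
          · conv_lhs => rw [h1]
            exact (Jah.cyc_lip hn hm a' b).2
        omega
      · obtain ⟨b', hadj, hds', hpm⟩ := Jah.step_away hn hm _ hsm
        have h := hc2 _ hadj
        rw [hdist2, Jah.dist_eq_D hn hm] at h
        simp only [Jah.D] at h
        have hcl : Jah.cyc n m b a ≤ Jah.cyc n m b' a + 1 := by
          rcases hpm with h1 | h1
          · rw [h1]
            exact (Jah.cyc_lip hn hm b a).1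
          · conv_lhs => rw [h1]
            exact (Jah.cyc_lip hn hm b' a).2
        have hcomm := Jah.cyc_comm hn hm a b
        have hcomm2 := Jah.cyc_comm hn hm a b'
        omega
  · intro hdist
    rcases x with _ | a
    · exfalso
      rw [Jah.dist_eq_D hn hm] at hdist
      rcases y with _ | b
      · simp only [Jah.D] at hdist
        omega
      · simp only [Jah.D] at hdist
        have := Jah.two_ds_le hn hm hodd b
        omega
    rcases y with _ | b
    · exfalso
      rw [Jah.dist_eq_D hn hm] at hdist
      simp only [Jah.D] at hdist
      have := Jah.two_ds_le hn hm hodd a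
      omega
    refine ⟨fun w hw => ?_, fun w hw => ?_⟩
    · rw [hdist, Jah.dist_eq_D hn hm]
      rcases w with _ | c
      · simp only [Jah.D]
        have := Jah.two_ds_le hn hm hodd b
        omega
      · simp only [Jah.D]
        have h1 := Jah.two_ds_le hn hm hodd c
        have h2 := Jah.two_ds_le hn hm hodd b
        omega
    · rw [hdist, Jah.dist_eq_D hn hm]
      rcases w with _ | c
      · simp only [Jah.D]
        have := Jah.two_ds_le hn hm hodd a
        omega
      · simp only [Jah.D]
        have h1 := Jah.two_ds_le hn hm hodd a
        have h2 := Jah.two_ds_le hn hm hodd c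
        omega
end
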